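/- arXiv:1606.01378 — 8 statements merged into one kernel-verified Lean document; each statement's English description precedes it below -/
import Mathlib

section
/- Let T>0, let k be in W^{1,1}([0,T]) (i.e. k is absolutely continuous on [0,T] with derivative k̇ ∈ L¹([0,T])), let H ∈ C¹(ℝ), and let u ∈ C¹([0,T]). Then for almost every t ∈ (0,T): H'(u(t)) · (d/dt)(k*u)(t) = (d/dt)(k*(H∘u))(t) + (−H(u(t)) + H'(u(t))·u(t))·k(t) + ∫₀ᵗ (H(u(t−s)) − H(u(t)) − H'(u(t))·(u(t−s) − u(t)))·(−k̇(s)) ds. -/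
/-!
Write `k x = k 0 + ∫₀ˣ k'` and `V = ∫₀ v`. Exchanging the order of integration over the triangle
`r, s > 0, r + s ≤ τ` turns `k * v` into `k 0 • V + k' * V`. Because `V 0 = 0`, differentiating
`k' * V` under the integral sign produces no boundary term, so for every continuous `v` and every
`t ∈ (0, T)` we get `(k * v)'(t) = k 0 v(t) + ∫₀ᵗ k'(s) v(t - s) ds`. Inserting this for `v = u`
and `v = H ∘ u`, together with `k t = k 0 + ∫₀ᵗ k'`, the identity becomes linearity of the integral.
-/

open MeasureTheory Set

lemma setIntegral_Ioc_indicator_Iic {f : ℝ → ℝ} {a b c : ℝ} (hac : a ≤ c) (hcb : c ≤ b) :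
    ∫ r in Ioc a b, (Iic c).indicator f r = ∫ r in a..c, f r := by
  rw [setIntegral_indicator measurableSet_Iic, Ioc_inter_Iic, min_eq_right hcb,
    intervalIntegral.integral_of_le hac]

/-- Both sides are the integral of `f r * g s` over the triangle `r, s > 0, r + s ≤ τ`. -/
lemma integral_primitive_mul_eq_integral_mul_primitive {f g : ℝ → ℝ} {τ : ℝ} (hτ : 0 ≤ τ)
    (hf : IntegrableOn f (Ioc 0 τ)) (hg : IntegrableOn g (Ioc 0 τ)) :
    ∫ s in 0..τ, (∫ r in 0..τ - s, f r) * g s = ∫ r in 0..τ, f r * ∫ s in 0..τ - r, g s := by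
  have hprod : Integrable (fun p : ℝ × ℝ => (Iic (τ - p.1)).indicator f p.2 * g p.1)
      ((volume.restrict (Ioc 0 τ)).prod (volume.restrict (Ioc 0 τ))) := by
    have hm : MeasurableSet {p : ℝ × ℝ | p.1 + p.2 ≤ τ} :=
      measurableSet_le (measurable_fst.add measurable_snd) measurable_const
    refine ((hg.mul_prod hf).indicator hm).congr (.of_forall fun p => ?_)
    by_cases h : p.1 + p.2 ≤ τ
    · simp [indicator_of_mem, h, show p.2 ≤ τ - p.1 by linarith, mul_comm]
    · simp [h, show ¬ p.2 ≤ τ - p.1 by intro; linarith]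
  have hswap := integral_integral_swap (f := fun s r => (Iic (τ - s)).indicator f r * g s) hprod
  rw [intervalIntegral.integral_of_le hτ, intervalIntegral.integral_of_le hτ]
  calc ∫ s in Ioc 0 τ, (∫ r in 0..τ - s, f r) * g s
      = ∫ s in Ioc 0 τ, ∫ r in Ioc 0 τ, (Iic (τ - s)).indicator f r * g s := by
        refine setIntegral_congr_fun measurableSet_Ioc fun s hs => ?_
        rw [integral_mul_const,
          setIntegral_Ioc_indicator_Iic (by linarith [hs.2]) (by linarith [hs.1])]
    _ = ∫ r in Ioc 0 τ, ∫ s in Ioc 0 τ, (Iic (τ - s)).indicator f r * g s := hswap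
    _ = ∫ r in Ioc 0 τ, f r * ∫ s in 0..τ - r, g s := by
        refine setIntegral_congr_fun measurableSet_Ioc fun r hr => ?_
        rw [← setIntegral_Ioc_indicator_Iic (b := τ) (by linarith [hr.2]) (by linarith [hr.1]),
          ← integral_const_mul]
        congr 1; ext s
        by_cases h : r ≤ τ - s
        · simp [h, show s ≤ τ - r by linarith]
        · simp [h, show ¬ s ≤ τ - r by intro; linarith]

section PrimitiveOfPositivePart

variable {v : ℝ → ℝ} {T : ℝ}

lemma abs_integral_max_zero_sub_le (hT : 0 ≤ T) (hv : ContinuousOn v (Icc 0 T)) {L : ℝ}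
    (hL : ∀ s ∈ Icc 0 T, ‖v s‖ ≤ L) {x y : ℝ} (hx : x ≤ T) (hy : y ≤ T) :
    |(∫ s in 0..max x 0, v s) - ∫ s in 0..max y 0, v s| ≤ L * |x - y| := by
  have hmem : ∀ z ≤ T, max z 0 ∈ Icc 0 T := fun z hz => ⟨le_max_right _ _, max_le hz hT⟩
  have hint : ∀ z ≤ T, IntervalIntegrable v volume 0 (max z 0) := fun z hz =>
    (hv.mono (uIcc_subset_Icc (left_mem_Icc.2 hT) (hmem z hz))).intervalIntegrable
  rw [intervalIntegral.integral_interval_sub_left (hint x hx) (hint y hy)]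
  calc |∫ s in max y 0..max x 0, v s| ≤ L * |max x 0 - max y 0| :=
        intervalIntegral.norm_integral_le_of_norm_le_const (f := v) fun z hz =>
          hL z (uIcc_subset_Icc (hmem y hy) (hmem x hx) (uIoc_subset_uIcc hz))
    _ ≤ L * |x - y| :=
        mul_le_mul_of_nonneg_left (abs_max_sub_max_le_abs _ _ _)
          ((abs_nonneg _).trans (hL 0 (left_mem_Icc.2 hT)))

lemma lipschitzOnWith_const_mul_integral_max_zero_sub (hT : 0 ≤ T)
    (hv : ContinuousOn v (Icc 0 T)) {L : ℝ} (hL : ∀ s ∈ Icc 0 T, ‖v s‖ ≤ L) (c : ℝ) {r : ℝ}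
    (hr : 0 ≤ r) :
    LipschitzOnWith (Real.nnabs (|c| * L)) (fun τ => c * ∫ s in 0..max (τ - r) 0, v s) (Iio T) := by
  have hL0 : 0 ≤ L := (norm_nonneg _).trans (hL 0 (left_mem_Icc.2 hT))
  refine lipschitzOnWith_iff_dist_le_mul.2 fun x hx y hy => ?_
  rw [Real.coe_nnabs, abs_of_nonneg (by positivity), Real.dist_eq, Real.dist_eq, ← mul_sub,
    abs_mul, mul_assoc]
  gcongr
  simpa using abs_integral_max_zero_sub_le hT hv hL (x := x - r) (y := y - r)
    (by linarith [mem_Iio.1 hx]) (by linarith [mem_Iio.1 hy])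

/-- Truncating at `0` moves the variable bound into the integrand, making it Lipschitz in `τ`. -/
lemma integral_mul_primitive_eq_setIntegral_max_zero {f : ℝ → ℝ} {τ : ℝ} (hτ : τ ∈ Icc 0 T) :
    ∫ r in 0..τ, f r * ∫ s in 0..τ - r, v s
      = ∫ r in Ioc 0 T, f r * ∫ s in 0..max (τ - r) 0, v s := by
  rw [← setIntegral_Ioc_indicator_Iic hτ.1 hτ.2]
  congr 1; ext r
  by_cases h : r ≤ τ
  · simp [h]
  · simp [h, max_eq_right (sub_nonpos.2 (not_le.1 h).le)]

lemma hasDerivAt_integral_max_zero_of_pos (hv : Continuous v) {x : ℝ} (hx : 0 < x) :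
    HasDerivAt (fun x => ∫ s in 0..max x 0, v s) (v x) x := by
  refine (hv.integral_hasStrictDerivAt 0 x).hasDerivAt.congr_of_eventuallyEq ?_
  filter_upwards [eventually_gt_nhds hx] with y hy
  rw [max_eq_left hy.le]

lemma hasDerivAt_integral_max_zero_of_neg {x : ℝ} (hx : x < 0) :
    HasDerivAt (fun x => ∫ s in 0..max x 0, v s) 0 x := by
  refine (hasDerivAt_const x 0).congr_of_eventuallyEq ?_
  filter_upwards [eventually_lt_nhds hx] with y hy
  rw [max_eq_right hy.le, intervalIntegral.integral_same]

lemma hasDerivAt_integral_mul_primitive {f : ℝ → ℝ} {t : ℝ} (hf : IntegrableOn f (Ioc 0 T))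
    (hv : Continuous v) (ht : t ∈ Ioo 0 T) :
    HasDerivAt (fun τ => ∫ r in 0..τ, f r * ∫ s in 0..τ - r, v s)
      (∫ r in 0..t, f r * v (t - r)) t := by
  have hT : 0 ≤ T := ht.1.le.trans ht.2.le
  set W : ℝ → ℝ := fun x => ∫ s in 0..max x 0, v s
  obtain ⟨L, hL⟩ := isCompact_Icc.exists_bound_of_continuousOn (hv.continuousOn (s := Icc 0 T))
  have hWcont : Continuous W :=
    (intervalIntegral.continuous_primitive (fun a b => hv.intervalIntegrable a b) 0).comp
      (continuous_id.max continuous_const)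
  have hWt : Continuous fun r => W (t - r) := hWcont.comp (continuous_const.sub continuous_id)
  have hlip : ∀ r ∈ Ioc 0 T,
      LipschitzOnWith (Real.nnabs (|f r| * L)) (fun τ => f r * W (τ - r)) (Iio T) :=
    fun r hr => lipschitzOnWith_const_mul_integral_max_zero_sub hT hv.continuousOn hL _ hr.1.le
  have hdiff : ∀ r ≠ t,
      HasDerivAt (fun τ => f r * W (τ - r))
        ((Iic t).indicator (fun r => f r * v (t - r)) r) t := by
    intro r hr
    rcases lt_or_gt_of_ne hr with h | h
    · rw [indicator_of_mem (mem_Iic.2 h.le)]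
      exact ((hasDerivAt_integral_max_zero_of_pos hv (sub_pos.2 h)).comp_sub_const t r).const_mul _
    · rw [indicator_of_notMem (notMem_Iic.2 h), ← mul_zero (f r)]
      exact ((hasDerivAt_integral_max_zero_of_neg (sub_neg.2 h)).comp_sub_const t r).const_mul _
  have hderiv := hasDerivAt_integral_of_dominated_loc_of_lip
    (F := fun τ r => f r * W (τ - r)) (F' := (Iic t).indicator fun r => f r * v (t - r))
    (bound := fun r => |f r| * L) (Iio_mem_nhds ht.2)
    (.of_forall fun τ => hf.aestronglyMeasurable.mul
      (hWcont.comp (continuous_const.sub continuous_id)).aestronglyMeasurable)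
    (hf.mul_continuousOn_of_subset hWt.continuousOn measurableSet_Ioc isCompact_Icc
      Ioc_subset_Icc_self)
    ((hf.aestronglyMeasurable.mul
      (hv.comp (continuous_const.sub continuous_id)).aestronglyMeasurable).indicator
      measurableSet_Iic)
    ((ae_restrict_iff' measurableSet_Ioc).2 (.of_forall hlip)) (hf.norm.mul_const L)
    (ae_restrict_of_ae ((measure_eq_zero_iff_ae_notMem.1 (measure_singleton t)).mono hdiff))
  rw [← setIntegral_Ioc_indicator_Iic ht.1.le ht.2.le]
  refine hderiv.2.congr_of_eventuallyEq ?_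
  filter_upwards [Ioo_mem_nhds ht.1 ht.2] with τ hτ using
    integral_mul_primitive_eq_setIntegral_max_zero (Ioo_subset_Icc_self hτ)

end PrimitiveOfPositivePart

lemma integral_comp_sub_mul_eq_add_integral_mul_primitive {T τ : ℝ} {k k' v : ℝ → ℝ}
    (hk' : IntegrableOn k' (Icc 0 T)) (hk : ∀ x ∈ Icc 0 T, k x = k 0 + ∫ s in 0..x, k' s)
    (hv : ContinuousOn v (Icc 0 T)) (hτ : τ ∈ Icc 0 T) :
    ∫ s in 0..τ, k (τ - s) * v s
      = k 0 * (∫ s in 0..τ, v s) + ∫ r in 0..τ, k' r * ∫ s in 0..τ - r, v s := by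
  have hT : 0 ≤ T := hτ.1.trans hτ.2
  have hIcc : Icc 0 τ ⊆ Icc 0 T := Icc_subset_Icc_right hτ.2
  have hvτ : ContinuousOn v (uIcc 0 τ) := by rw [uIcc_of_le hτ.1]; exact hv.mono hIcc
  have hK : ContinuousOn (fun x => ∫ s in 0..x, k' s) (Icc 0 T) := by
    simpa [uIcc_of_le hT] using
      intervalIntegral.continuousOn_primitive_interval (a := 0) (b := T) (by rwa [uIcc_of_le hT])
  have hsub : ∀ s ∈ uIcc 0 τ, τ - s ∈ Icc 0 T := by
    intro s hs
    rw [uIcc_of_le hτ.1] at hs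
    exact ⟨by linarith [hs.2], by linarith [hs.1, hτ.2]⟩
  have hKv : IntervalIntegrable (fun s => (∫ r in 0..τ - s, k' r) * v s) volume 0 τ :=
    ((hK.comp (continuous_const.sub continuous_id).continuousOn hsub).mul hvτ).intervalIntegrable
  rw [← integral_primitive_mul_eq_integral_mul_primitive hτ.1
      (hk'.mono_set (Ioc_subset_Icc_self.trans hIcc))
      ((hv.mono hIcc).integrableOn_Icc.mono_set Ioc_subset_Icc_self),
    ← intervalIntegral.integral_const_mul,
    ← intervalIntegral.integral_add (hvτ.intervalIntegrable.const_mul _) hKv]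
  refine intervalIntegral.integral_congr fun s hs => ?_
  rw [hk _ (hsub s hs)]
  ring

lemma hasDerivAt_integral_comp_sub_mul {T t : ℝ} {k k' v : ℝ → ℝ}
    (hk' : IntegrableOn k' (Icc 0 T)) (hk : ∀ x ∈ Icc 0 T, k x = k 0 + ∫ s in 0..x, k' s)
    (hv : ContinuousOn v (Icc 0 T)) (ht : t ∈ Ioo 0 T) :
    HasDerivAt (fun τ => ∫ s in 0..τ, k (τ - s) * v s)
      (k 0 * v t + ∫ s in 0..t, k' s * v (t - s)) t := by
  have hT : 0 ≤ T := ht.1.le.trans ht.2.le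
  set w := IccExtend hT ((Icc 0 T).domRestrict v)
  have hwc : Continuous w := hv.domRestrict.Icc_extend'
  have hwv : ∀ x ∈ Icc 0 T, w x = v x := fun x hx => IccExtend_of_mem _ _ hx
  have hsplit : ∀ τ ∈ Ioo 0 T, ∫ s in 0..τ, k (τ - s) * v s
      = k 0 * (∫ s in 0..τ, w s) + ∫ r in 0..τ, k' r * ∫ s in 0..τ - r, w s := by
    intro τ hτ
    rw [← integral_comp_sub_mul_eq_add_integral_mul_primitive hk' hk hwc.continuousOn
      (Ioo_subset_Icc_self hτ)]
    refine intervalIntegral.integral_congr fun s hs => ?_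
    rw [uIcc_of_le hτ.1.le] at hs
    rw [hwv s ⟨hs.1, hs.2.trans hτ.2.le⟩]
  have hderiv : HasDerivAt
      (fun τ => k 0 * (∫ s in 0..τ, w s) + ∫ r in 0..τ, k' r * ∫ s in 0..τ - r, w s)
      (k 0 * w t + ∫ s in 0..t, k' s * w (t - s)) t :=
    ((hwc.integral_hasStrictDerivAt 0 t).hasDerivAt.const_mul _).add
      (hasDerivAt_integral_mul_primitive (hk'.mono_set Ioc_subset_Icc_self) hwc ht)
  have hval : k 0 * w t + ∫ s in 0..t, k' s * w (t - s)
      = k 0 * v t + ∫ s in 0..t, k' s * v (t - s) := by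
    rw [hwv t (Ioo_subset_Icc_self ht)]
    congr 1
    refine intervalIntegral.integral_congr fun s hs => ?_
    rw [uIcc_of_le ht.1.le] at hs
    rw [hwv _ ⟨by linarith [hs.2], by linarith [hs.1, ht.2]⟩]
  rw [← hval]
  refine hderiv.congr_of_eventuallyEq ?_
  filter_upwards [Ioo_mem_nhds ht.1 ht.2] with τ hτ using hsplit τ hτ

theorem statement0_general
    (T : ℝ)
    (k k' : ℝ → ℝ)
    (hk'int : IntegrableOn k' (Icc 0 T))
    (hkac : ∀ t ∈ Icc (0 : ℝ) T, k t = k 0 + ∫ s in (0 : ℝ)..t, k' s)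
    (H : ℝ → ℝ) (hH : ContDiff ℝ 1 H)
    (u : ℝ → ℝ) (hu : ContDiffOn ℝ 1 u (Icc 0 T)) :
    ∀ᵐ t ∂(volume.restrict (Ioo 0 T)),
      deriv H (u t) * deriv (fun τ => ∫ s in (0 : ℝ)..τ, k (τ - s) * u s) t
        = deriv (fun τ => ∫ s in (0 : ℝ)..τ, k (τ - s) * H (u s)) t
          + (-(H (u t)) + deriv H (u t) * u t) * k t
          + ∫ s in (0 : ℝ)..t,
              (H (u (t - s)) - H (u t) - deriv H (u t) * (u (t - s) - u t)) * (-(k' s)) := by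
  refine (ae_restrict_iff' measurableSet_Ioo).2 (.of_forall fun t ht => ?_)
  have hHu : ContinuousOn (fun s => H (u s)) (Icc 0 T) :=
    hH.continuous.comp_continuousOn hu.continuousOn
  have hk't : IntervalIntegrable k' volume 0 t :=
    (intervalIntegrable_iff_integrableOn_Icc_of_le ht.1.le).2
      (hk'int.mono_set (Icc_subset_Icc_right ht.2.le))
  have hint : ∀ g : ℝ → ℝ, ContinuousOn g (Icc 0 T) →
      IntervalIntegrable (fun s => k' s * g (t - s)) volume 0 t := fun g hg =>
    hk't.mul_continuousOn <|
      hg.comp (continuous_const.sub continuous_id).continuousOn fun s hs => by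
        rw [uIcc_of_le ht.1.le] at hs
        exact ⟨by linarith [hs.2], by linarith [hs.1, ht.2]⟩
  have hk'u := (hint u hu.continuousOn).const_mul (deriv H (u t))
  have hk'Hu := hint _ hHu
  have hk'c : ∀ c : ℝ, IntervalIntegrable (fun s => c * k' s) volume 0 t := hk't.const_mul
  have hlast : ∫ s in (0 : ℝ)..t,
        (H (u (t - s)) - H (u t) - deriv H (u t) * (u (t - s) - u t)) * (-(k' s))
      = ∫ s in (0 : ℝ)..t, (H (u t) * k' s + deriv H (u t) * (k' s * u (t - s))
          - deriv H (u t) * u t * k' s - k' s * H (u (t - s))) := by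
    congr 1; ext s; ring
  rw [(hasDerivAt_integral_comp_sub_mul hk'int hkac hu.continuousOn ht).deriv,
    (hasDerivAt_integral_comp_sub_mul hk'int hkac hHu ht).deriv, hkac t (Ioo_subset_Icc_self ht),
    hlast, intervalIntegral.integral_sub (((hk'c _).add hk'u).sub (hk'c _)) hk'Hu,
    intervalIntegral.integral_sub ((hk'c _).add hk'u) (hk'c _),
    intervalIntegral.integral_add (hk'c _) hk'u, intervalIntegral.integral_const_mul,
    intervalIntegral.integral_const_mul, intervalIntegral.integral_const_mul]
  ring

/-- The "fundamental identity" for time-fractional derivatives: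
for `k ∈ W^{1,1}([0,T])` (absolutely continuous with integrable derivative `k'`),
`H ∈ C¹(ℝ)` and `u ∈ C¹([0,T])`, for a.e. `t ∈ (0,T)`:
`H'(u(t)) (k*u)'(t) = (k*(H∘u))'(t) + (-H(u(t)) + H'(u(t)) u(t)) k(t)
  + ∫₀ᵗ (H(u(t-s)) - H(u(t)) - H'(u(t))(u(t-s)-u(t))) (-k'(s)) ds`. -/
theorem statement0
    (T : ℝ) (hT : 0 < T)
    (k k' : ℝ → ℝ)
    (hk'int : IntegrableOn k' (Icc 0 T))
    (hkac : ∀ t ∈ Icc (0 : ℝ) T, k t = k 0 + ∫ s in (0 : ℝ)..t, k' s)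
    (H : ℝ → ℝ) (hH : ContDiff ℝ 1 H)
    (u : ℝ → ℝ) (hu : ContDiffOn ℝ 1 u (Icc 0 T)) :
    ∀ᵐ t ∂(volume.restrict (Ioo 0 T)),
      deriv H (u t) * deriv (fun τ => ∫ s in (0 : ℝ)..τ, k (τ - s) * u s) t
        = deriv (fun τ => ∫ s in (0 : ℝ)..τ, k (τ - s) * H (u s)) t
          + (-(H (u t)) + deriv H (u t) * u t) * k t
          + ∫ s in (0 : ℝ)..t,
              (H (u (t - s)) - H (u t) - deriv H (u t) * (u (t - s) - u t)) * (-(k' s)) :=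
  statement0_general T k k' hk'int hkac H hH u hu
end

section
/- Let T>0 and let k ∈ W^{1,1}([0,T]) (k absolutely continuous with k̇ ∈ L¹([0,T])) be nonnegative and nonincreasing, and let u ∈ L²([0,T]). Then the functions t ↦ (k*u)(t) and t ↦ (k*(u⁺)²)(t) are differentiable at almost every t ∈ (0,T), and for almost every t ∈ (0,T): u(t)⁺ · (d/dt)(k*u)(t) ≥ (1/2) · (d/dt)(k*(u⁺)²)(t). -/
/-!
Extend `g ∈ {u, (u⁺)²}` and `k'` by zero outside `(0, T]`. Writing `k(τ - s) = k(0) + ∫₀^{τ-s} k'`,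
Fubini turns `(k * g)(τ)` into the primitive of the integrable function `k(0) g + k' * g`, so by the
Lebesgue differentiation theorem `(k * g)' = k(0) g + k' * g` almost everywhere. Monotonicity of `k`
gives `k' ≤ 0` a.e., and the elementary bound `v y - (y⁺)² / 2 ≤ v² / 2` (for `v ≥ 0`), integrated
against `-k'(t - s)` with `v = u(t)⁺`, yields the inequality with the remainder
`u(t)⁺² k(t) / 2 ≥ 0`.
-/

open MeasureTheory Set Filter
open scoped Topology Convolution

section CausalConvolution

variable {f K : ℝ → ℝ}

theorem convolution_eq_intervalIntegral_of_eq_zero {g : ℝ → ℝ} (hf : ∀ x ≤ 0, f x = 0)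
    (hg : ∀ x < 0, g x = 0) {t : ℝ} (ht : 0 ≤ t) :
    (f ⋆ g) t = ∫ s in 0..t, f s * g (t - s) := by
  have hsupp : ∀ s ∉ Ioc 0 t, f s * g (t - s) = 0 := by
    intro s hs
    rcases le_or_gt s 0 with h | h
    · simp [hf s h]
    · simp [hg (t - s) (by grind)]
  rw [convolution_lsmul, intervalIntegral.integral_of_le ht,
    setIntegral_eq_integral_of_forall_compl_eq_zero hsupp]
  rfl

theorem setIntegral_convolution (hf : Integrable f) (hK : Integrable K) (s : Set ℝ) :
    ∫ τ in s, (f ⋆ K) τ = ∫ x, f x * ∫ τ in s, K (τ - x) := by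
  have hint : Integrable (fun p : ℝ × ℝ => f p.2 * K (p.1 - p.2))
      ((volume.restrict s).prod volume) := by
    rw [Measure.restrict_prod_eq_prod_univ]
    exact (hf.convolution_integrand (ContinuousLinearMap.lsmul ℝ ℝ) hK).restrict
  simp_rw [convolution_lsmul, smul_eq_mul, ← integral_const_mul]
  exact integral_integral_swap hint

theorem intervalIntegral_primitive_mul_eq_intervalIntegral_convolution (hf : Integrable f)
    (hf0 : ∀ x ≤ 0, f x = 0) (hK : Integrable K) (hK0 : ∀ x < 0, K x = 0) {t : ℝ} (ht : 0 ≤ t) :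
    ∫ s in 0..t, (∫ r in 0..t - s, K r) * f s = ∫ τ in 0..t, (f ⋆ K) τ := by
  have hprim0 : ∀ y ≤ 0, ∫ r in 0..y, K r = 0 := fun y hy =>
    (intervalIntegral.integral_congr_uIoo (g := 0) fun r hr =>
      hK0 r (hr.2.trans_le (max_le le_rfl hy))).trans (by simp)
  have hslice : ∀ x, ∫ τ in Ioc 0 t, K (τ - x) = (∫ r in 0..t - x, K r) - ∫ r in 0..-x, K r := by
    intro x
    rw [← intervalIntegral.integral_of_le ht, intervalIntegral.integral_comp_sub_right, zero_sub,
      intervalIntegral.integral_interval_sub_left hK.intervalIntegrable hK.intervalIntegrable]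
  have hsupp : ∀ x ∉ Ioc 0 t, f x * ∫ τ in Ioc 0 t, K (τ - x) = 0 := by
    intro x hx
    rcases le_or_gt x 0 with h | h
    · simp [hf0 x h]
    · rw [hslice, hprim0 _ (by grind), hprim0 _ (by linarith), sub_zero, mul_zero]
  rw [intervalIntegral.integral_of_le ht, intervalIntegral.integral_of_le ht,
    setIntegral_convolution hf hK, ← setIntegral_eq_integral_of_forall_compl_eq_zero hsupp]
  refine setIntegral_congr_fun measurableSet_Ioc fun x hx => ?_
  rw [hslice, hprim0 (-x) (by linarith [hx.1]), sub_zero, mul_comm]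

theorem intervalIntegral_mul_eq_intervalIntegral_add_convolution {k : ℝ → ℝ} (hf : Integrable f)
    (hf0 : ∀ x ≤ 0, f x = 0) (hK : Integrable K) (hK0 : ∀ x < 0, K x = 0) {t : ℝ} (ht : 0 ≤ t)
    (hk : ∀ x ∈ Icc 0 t, k x = k 0 + ∫ r in 0..x, K r) :
    ∫ s in 0..t, k (t - s) * f s = ∫ τ in 0..t, (k 0 * f τ + (f ⋆ K) τ) := by
  have hprim : IntervalIntegrable (fun s => (∫ r in 0..t - s, K r) * f s) volume 0 t :=
    hf.intervalIntegrable.continuousOn_mul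
      ((intervalIntegral.continuous_primitive (fun _ _ => hK.intervalIntegrable) 0).comp
        (continuous_sub_left t)).continuousOn
  rw [intervalIntegral.integral_add (hf.intervalIntegrable.const_mul _)
      (hf.integrable_convolution _ hK).intervalIntegrable,
    ← intervalIntegral_primitive_mul_eq_intervalIntegral_convolution hf hf0 hK hK0 ht,
    ← intervalIntegral.integral_add (hf.intervalIntegrable.const_mul _) hprim]
  refine intervalIntegral.integral_congr fun s hs => ?_
  rw [uIcc_of_le ht] at hs
  simp only [hk (t - s) ⟨by linarith [hs.2], by linarith [hs.1]⟩]
  ring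

end CausalConvolution

section Volterra

variable {T : ℝ} {k' g : ℝ → ℝ}

theorem integrable_indicator_Ioc (hg : IntegrableOn g (Icc 0 T)) :
    Integrable ((Ioc 0 T).indicator g) :=
  (integrable_indicator_iff measurableSet_Ioc).2 (hg.mono_set Ioc_subset_Icc_self)

theorem indicator_mul_indicator_comp_sub_eqOn {t : ℝ} (ht : t ≤ T) :
    EqOn (fun s => (Ioc 0 T).indicator g s * (Ioc 0 T).indicator k' (t - s))
      (fun s => k' (t - s) * g s) (Ioo 0 t) := by
  intro s hs
  dsimp only
  rw [indicator_of_mem (by grind), indicator_of_mem (by grind), mul_comm]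

theorem ae_intervalIntegrable_comp_sub_mul (hk' : IntegrableOn k' (Icc 0 T))
    (hg : IntegrableOn g (Icc 0 T)) :
    ∀ᵐ t ∂volume.restrict (Ioo 0 T), IntervalIntegrable (fun s => k' (t - s) * g s) volume 0 t := by
  filter_upwards [ae_restrict_mem measurableSet_Ioo, ae_restrict_of_ae
    ((integrable_indicator_Ioc hg).ae_convolution_exists (ContinuousLinearMap.lsmul ℝ ℝ)
      (integrable_indicator_Ioc hk'))] with t ht hconv
  have hprod : IntervalIntegrable
      (fun s => (Ioc 0 T).indicator g s * (Ioc 0 T).indicator k' (t - s)) volume 0 t :=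
    hconv.intervalIntegrable
  exact hprod.congr_uIoo (uIoo_of_le ht.1.le ▸ indicator_mul_indicator_comp_sub_eqOn ht.2.le)

theorem ae_hasDerivAt_volterra {k : ℝ → ℝ} (hk' : IntegrableOn k' (Icc 0 T))
    (hk : ∀ t ∈ Icc 0 T, k t = k 0 + ∫ s in 0..t, k' s) (hg : IntegrableOn g (Icc 0 T)) :
    ∀ᵐ t ∂volume.restrict (Ioo 0 T), HasDerivAt (fun τ => ∫ s in 0..τ, k (τ - s) * g s)
      (k 0 * g t + ∫ s in 0..t, k' (t - s) * g s) t := by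
  set f := (Ioc 0 T).indicator g
  set K := (Ioc 0 T).indicator k'
  have hf : Integrable f := integrable_indicator_Ioc hg
  have hK : Integrable K := integrable_indicator_Ioc hk'
  have hfg : EqOn f g (Ioc 0 T) := fun s hs => indicator_of_mem hs g
  have hKk : EqOn K k' (Ioc 0 T) := fun s hs => indicator_of_mem hs k'
  have hf0 : ∀ x ≤ 0, f x = 0 := fun x hx => indicator_of_notMem (by grind) _
  have hK0 : ∀ x < 0, K x = 0 := fun x hx => indicator_of_notMem (by grind) _
  set F := fun τ => k 0 * f τ + (f ⋆ K) τ
  have hF : Integrable F := (hf.const_mul _).add (hf.integrable_convolution _ hK)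
  filter_upwards [ae_restrict_mem measurableSet_Ioo,
    ae_restrict_of_ae (LocallyIntegrable.ae_hasDerivAt_integral hF.locallyIntegrable)]
    with t ht hderiv
  have heq : (fun τ => ∫ s in 0..τ, k (τ - s) * g s) =ᶠ[𝓝 t] fun τ => ∫ s in 0..τ, F s := by
    filter_upwards [Ioo_mem_nhds ht.1 ht.2] with τ hτ
    rw [← intervalIntegral_mul_eq_intervalIntegral_add_convolution hf hf0 hK hK0 hτ.1.le]
    · refine intervalIntegral.integral_congr_Ioo_of_le hτ.1.le fun s hs => ?_
      rw [hfg ⟨hs.1, hs.2.le.trans hτ.2.le⟩]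
    · intro x hx
      rw [hk x ⟨hx.1, hx.2.trans hτ.2.le⟩]
      congr 1
      refine intervalIntegral.integral_congr_Ioo_of_le hx.1 fun r hr => ?_
      rw [hKk ⟨hr.1, hr.2.le.trans (hx.2.trans hτ.2.le)⟩]
  have hval : F t = k 0 * g t + ∫ s in 0..t, k' (t - s) * g s := by
    simp only [F, convolution_eq_intervalIntegral_of_eq_zero hf0 hK0 ht.1.le]
    rw [hfg ⟨ht.1, ht.2.le⟩, intervalIntegral.integral_congr_Ioo_of_le ht.1.le
      (indicator_mul_indicator_comp_sub_eqOn ht.2.le)]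
  exact hval ▸ (hderiv 0).congr_of_eventuallyEq heq

end Volterra

theorem ae_nonpos_of_antitoneOn_of_eq_add_integral {T : ℝ} {k k' : ℝ → ℝ}
    (hk' : IntegrableOn k' (Icc 0 T)) (hk : ∀ t ∈ Icc 0 T, k t = k 0 + ∫ s in 0..t, k' s)
    (hmono : AntitoneOn k (Icc 0 T)) :
    ∀ᵐ x, x ∈ Icc 0 T → k' x ≤ 0 := by
  rcases lt_or_ge T 0 with hT | hT
  · exact Eventually.of_forall fun x hx => absurd (hx.1.trans hx.2) hT.not_ge
  have hprim : AntitoneOn (fun x => ∫ s in 0..x, k' s) (Icc 0 T) :=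
    fun x hx y hy hxy => by linarith [hk x hx, hk y hy, hmono hx hy hxy]
  filter_upwards [(Ioo_ae_eq_Icc (μ := volume)).mem_iff,
    (by rwa [uIcc_of_le hT] : IntegrableOn k' (uIcc 0 T)).intervalIntegrable.ae_hasDerivAt_integral]
    with x hIoo hderiv hx
  have hx' : x ∈ Ioo 0 T := hIoo.2 hx
  have hacc : AccPt x (𝓟 (Icc 0 T)) :=
    uniqueDiffWithinAt_iff_accPt.1 (uniqueDiffOn_Icc (hx'.1.trans hx'.2) x hx)
  rw [uIcc_of_le hT] at hderiv
  exact ((hderiv hx 0 ⟨le_rfl, hT⟩).hasDerivWithinAt).nonpos_of_antitoneOn hacc hprim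

theorem half_mul_posPart_sq_le {a u : ℝ → ℝ} {c x t : ℝ} (ht : 0 ≤ t)
    (ha : ∀ᵐ s, s ∈ Icc 0 t → a s ≤ 0) (ha_int : IntervalIntegrable a volume 0 t)
    (hau : IntervalIntegrable (fun s => a s * u s) volume 0 t)
    (hau2 : IntervalIntegrable (fun s => a s * max (u s) 0 ^ 2) volume 0 t)
    (hc : 0 ≤ c + ∫ s in 0..t, a s) :
    1 / 2 * (c * max x 0 ^ 2 + ∫ s in 0..t, a s * max (u s) 0 ^ 2)
      ≤ max x 0 * (c * x + ∫ s in 0..t, a s * u s) := by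
  set v := max x 0
  have hvx : v * x = v ^ 2 := by
    rcases le_total x 0 with h | h <;> simp [v, h, sq]
  have hmono : ∫ s in 0..t, a s * (1 / 2 * v ^ 2)
      ≤ ∫ s in 0..t, (v * (a s * u s) - 1 / 2 * (a s * max (u s) 0 ^ 2)) := by
    refine intervalIntegral.integral_mono_ae_restrict ht (ha_int.mul_const _)
      ((hau.const_mul v).sub (hau2.const_mul _)) ?_
    filter_upwards [(ae_restrict_iff' measurableSet_Icc).2 ha] with s has
    have hpt : v * u s - 1 / 2 * max (u s) 0 ^ 2 ≤ 1 / 2 * v ^ 2 := by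
      nlinarith [mul_le_mul_of_nonneg_left (le_max_left (u s) 0) (le_max_right x 0),
        sq_nonneg (v - max (u s) 0)]
    linarith [mul_le_mul_of_nonpos_left hpt has]
  rw [intervalIntegral.integral_mul_const, intervalIntegral.integral_sub (hau.const_mul v)
    (hau2.const_mul _), intervalIntegral.integral_const_mul,
    intervalIntegral.integral_const_mul] at hmono
  have hcx : v * (c * x) = c * v ^ 2 := by rw [← hvx]; ring
  linarith [mul_nonneg (sq_nonneg v) hc]

theorem statement1_general
    (T : ℝ)
    (k k' : ℝ → ℝ)
    (hk'int : IntegrableOn k' (Icc 0 T))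
    (hkac : ∀ t ∈ Icc (0 : ℝ) T, k t = k 0 + ∫ s in (0 : ℝ)..t, k' s)
    (hknonneg : ∀ t ∈ Icc (0 : ℝ) T, 0 ≤ k t)
    (hkmono : AntitoneOn k (Icc 0 T))
    (u : ℝ → ℝ) (hu : MemLp u 2 (volume.restrict (Icc 0 T))) :
    ∀ᵐ t ∂(volume.restrict (Ioo 0 T)),
      DifferentiableAt ℝ (fun τ => ∫ s in (0 : ℝ)..τ, k (τ - s) * u s) t ∧
      DifferentiableAt ℝ (fun τ => ∫ s in (0 : ℝ)..τ, k (τ - s) * (max (u s) 0) ^ 2) t ∧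
      (1 / 2) * deriv (fun τ => ∫ s in (0 : ℝ)..τ, k (τ - s) * (max (u s) 0) ^ 2) t
        ≤ max (u t) 0 * deriv (fun τ => ∫ s in (0 : ℝ)..τ, k (τ - s) * u s) t := by
  have hu1 : IntegrableOn u (Icc 0 T) := hu.integrable one_le_two
  have hw1 : IntegrableOn (fun s => max (u s) 0 ^ 2) (Icc 0 T) := hu.pos_part.integrable_sq
  have hk'neg := ae_nonpos_of_antitoneOn_of_eq_add_integral hk'int hkac hkmono
  filter_upwards [ae_restrict_mem measurableSet_Ioo, ae_hasDerivAt_volterra hk'int hkac hu1,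
    ae_hasDerivAt_volterra hk'int hkac hw1, ae_intervalIntegrable_comp_sub_mul hk'int hu1,
    ae_intervalIntegrable_comp_sub_mul hk'int hw1] with t ht hdu hdw hiu hiw
  have htT : t ∈ Icc 0 T := Ioo_subset_Icc_self ht
  refine ⟨hdu.differentiableAt, hdw.differentiableAt, ?_⟩
  rw [hdu.deriv, hdw.deriv]
  refine half_mul_posPart_sq_le htT.1 ?_ ?_ hiu hiw ?_
  · filter_upwards [(Measure.measurePreserving_sub_left volume t).quasiMeasurePreserving.ae
      hk'neg] with s hs hst
    exact hs ⟨by linarith [hst.2], by linarith [hst.1, htT.2]⟩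
  · have hk't : IntervalIntegrable k' volume 0 t :=
      (intervalIntegrable_iff_integrableOn_Icc_of_le htT.1).2
        (hk'int.mono_set (Icc_subset_Icc_right htT.2))
    simpa using hk't.symm.comp_sub_left t
  · rw [intervalIntegral.integral_comp_sub_left, sub_self, sub_zero, ← hkac t htT]
    exact hknonneg t htT

/-- Let `k ∈ W^{1,1}([0,T])` be nonnegative and nonincreasing on `[0,T]`,
and `u ∈ L²([0,T])`. Then `t ↦ (k*u)(t)` and `t ↦ (k*(u⁺)²)(t)` are differentiable at
a.e. `t ∈ (0,T)`, and for a.e. `t ∈ (0,T)`: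
`u(t)⁺ (k*u)'(t) ≥ (1/2) (k*(u⁺)²)'(t)`. -/
theorem statement1
    (T : ℝ) (hT : 0 < T)
    (k k' : ℝ → ℝ)
    (hk'int : IntegrableOn k' (Icc 0 T))
    (hkac : ∀ t ∈ Icc (0 : ℝ) T, k t = k 0 + ∫ s in (0 : ℝ)..t, k' s)
    (hknonneg : ∀ t ∈ Icc (0 : ℝ) T, 0 ≤ k t)
    (hkmono : AntitoneOn k (Icc 0 T))
    (u : ℝ → ℝ) (hu : MemLp u 2 (volume.restrict (Icc 0 T))) :
    ∀ᵐ t ∂(volume.restrict (Ioo 0 T)),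
      DifferentiableAt ℝ (fun τ => ∫ s in (0 : ℝ)..τ, k (τ - s) * u s) t ∧
      DifferentiableAt ℝ (fun τ => ∫ s in (0 : ℝ)..τ, k (τ - s) * (max (u s) 0) ^ 2) t ∧
      (1 / 2) * deriv (fun τ => ∫ s in (0 : ℝ)..τ, k (τ - s) * (max (u s) 0) ^ 2) t
        ≤ max (u t) 0 * deriv (fun τ => ∫ s in (0 : ℝ)..τ, k (τ - s) * u s) t :=
  statement1_general T k k' hk'int hkac hknonneg hkmono u hu
end

section
/- Let T>0 and let k ∈ W^{1,1}([0,T]) (k absolutely continuous with k̇ ∈ L¹([0,T])) be nonnegative and nonincreasing, and let u ∈ L²([0,T]). Then for almost every t ∈ (0,T): u(t)⁻ · (d/dt)(k*u)(t) ≤ −(1/2) · (d/dt)(k*(u⁻)²)(t). -/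
/-!
Extend `k'` and `u` by zero outside `(0, T]` and write `⋆` for convolution on the whole line.
Since `k(τ - s) = k(0) + ∫₀^{τ-s} k'`, Fubini gives `(k * u)(τ) = ∫₀^τ (k(0) u + u ⋆ k')`, so by
Lebesgue's differentiation theorem `(k * u)'(t) = k(0) u(t) + (u ⋆ k')(t)` for a.e. `t`, and
likewise for `(u⁻)²`. Monotonicity of `k` makes `k' ≤ 0` a.e. With `a = u(t)⁻` we have
`a u(t) = -a²` and `a u(s) ≥ -(a² + u(s)⁻²) / 2`; multiplying the latter by `k'(t - s) ≤ 0` and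
integrating in `s` bounds `a (k * u)'(t) + (k * (u⁻)²)'(t) / 2` by
`-a² (k(0) + ∫ k') / 2 = -a² k(T) / 2 ≤ 0`.
-/

open MeasureTheory Set Filter Topology
open scoped Convolution

noncomputable def causalConv (k v : ℝ → ℝ) (t : ℝ) : ℝ :=
  ∫ s in (0 : ℝ)..t, k (t - s) * v s

lemma causalConv_eventuallyEq {k u v : ℝ → ℝ} {T t : ℝ} (huv : EqOn u v (Ioc 0 T))
    (ht : t ∈ Ioo 0 T) : causalConv k u =ᶠ[𝓝 t] causalConv k v := by
  filter_upwards [Ioo_mem_nhds ht.1 ht.2] with τ hτ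
  refine intervalIntegral.integral_congr_ae (Eventually.of_forall fun s hs => ?_)
  rw [uIoc_of_le hτ.1.le] at hs
  rw [huv ⟨hs.1, hs.2.trans hτ.2.le⟩]

lemma intervalIntegral_eq_zero_of_nonpos {f : ℝ → ℝ} (hf : ∀ r ≤ 0, f r = 0) {a b : ℝ}
    (ha : a ≤ 0) (hb : b ≤ 0) : ∫ r in a..b, f r = 0 := by
  rw [intervalIntegral.integral_congr (g := fun _ => 0) fun r hr => hf r ?_,
    intervalIntegral.integral_zero]
  exact hr.2.trans (max_le ha hb)

lemma ae_nonpos_of_antitoneOn_primitive {k k' : ℝ → ℝ} {a b : ℝ}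
    (hk' : IntervalIntegrable k' volume a b)
    (hk : ∀ t ∈ Icc a b, k t = k a + ∫ s in a..t, k' s) (hanti : AntitoneOn k (Icc a b)) :
    ∀ᵐ r, r ∈ Icc a b → k' r ≤ 0 := by
  filter_upwards [hk'.ae_hasDerivAt_integral, Measure.ae_ne volume a, Measure.ae_ne volume b]
    with r hderiv hra hrb hr
  have hprim : AntitoneOn (fun x => ∫ s in a..x, k' s) (Icc a b) := by
    intro x hx y hy hxy
    have := hanti hx hy hxy
    rw [hk x hx, hk y hy] at this
    linarith
  have hacc : AccPt r (𝓟 (Icc a b)) := by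
    simpa using (PerfectSpace.univ_preperfect _ (mem_univ r)).nhds_inter
      (Icc_mem_nhds (lt_of_le_of_ne hr.1 hra.symm) (lt_of_le_of_ne hr.2 hrb))
  have hab : a ≤ b := hr.1.trans hr.2
  exact (hderiv (by rwa [uIcc_of_le hab]) a left_mem_uIcc).hasDerivWithinAt.nonpos_of_antitoneOn
    hacc hprim

lemma mul_mul_le_of_nonneg_of_nonpos {a c : ℝ} (y : ℝ) (ha : 0 ≤ a) (hc : c ≤ 0) :
    a * (y * c) ≤ -(1 / 2) * (max (-y) 0 ^ 2 * c + a ^ 2 * c) := by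
  have hy : -max (-y) 0 ≤ y := neg_le.1 (le_max_left _ _)
  have hay : -(1 / 2) * (max (-y) 0 ^ 2 + a ^ 2) ≤ a * y := by
    nlinarith [sq_nonneg (a - max (-y) 0), mul_le_mul_of_nonneg_left hy ha]
  nlinarith [mul_le_mul_of_nonpos_right hay hc]

lemma MeasureTheory.MemLp.integrable_negPart_sq {α : Type*} [MeasurableSpace α] {μ : Measure α}
    {f : α → ℝ} (hf : MemLp f 2 μ) : Integrable (fun x => max (-f x) 0 ^ 2) μ := by
  have hmeas : AEMeasurable (fun x => max (-f x) 0 ^ 2) μ :=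
    (hf.aestronglyMeasurable.aemeasurable.neg.max aemeasurable_const).pow_const 2
  refine hf.integrable_sq.mono' hmeas.aestronglyMeasurable (Eventually.of_forall fun x => ?_)
  rw [Real.norm_of_nonneg (by positivity)]
  rcases max_cases (-f x) 0 with ⟨h, _⟩ | ⟨h, _⟩ <;> rw [h] <;> nlinarith

section KernelDerivative

variable {k K V : ℝ → ℝ} {T : ℝ}

lemma integral_convolution_eq_integral_mul_primitive (hK : Integrable K) (hV : Integrable V)
    (hK0 : ∀ r ≤ 0, K r = 0) (hV0 : ∀ s ≤ 0, V s = 0) {τ : ℝ} (hτ : 0 ≤ τ) :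
    ∫ σ in (0 : ℝ)..τ, (V ⋆ K) σ = ∫ s in (0 : ℝ)..τ, V s * ∫ r in (0 : ℝ)..τ - s, K r := by
  have hint : Integrable (fun p : ℝ × ℝ => V p.2 * K (p.1 - p.2))
      ((volume.restrict (Ioc 0 τ)).prod volume) := by
    rw [Measure.restrict_prod_eq_prod_univ]
    simpa using (hV.convolution_integrand (ContinuousLinearMap.lsmul ℝ ℝ) hK).restrict
  have hslice : (fun s => ∫ σ in Ioc 0 τ, V s * K (σ - s))
      = indicator (Ioc 0 τ) fun s => V s * ∫ r in (0 : ℝ)..τ - s, K r := by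
    ext s
    rw [integral_const_mul, ← intervalIntegral.integral_of_le hτ,
      intervalIntegral.integral_comp_sub_right, zero_sub]
    by_cases hs0 : s ≤ 0
    · rw [indicator_of_notMem fun h => not_le.2 h.1 hs0, hV0 s hs0, zero_mul]
    by_cases hsτ : s ≤ τ
    · rw [indicator_of_mem (show s ∈ Ioc 0 τ from ⟨not_le.1 hs0, hsτ⟩),
        ← intervalIntegral.integral_add_adjacent_intervals (b := 0),
        intervalIntegral_eq_zero_of_nonpos hK0 (by linarith) le_rfl, zero_add] <;>
      exact hK.intervalIntegrable
    · rw [indicator_of_notMem fun h => hsτ h.2,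
        intervalIntegral_eq_zero_of_nonpos hK0 (by linarith) (by linarith), mul_zero]
  simp only [intervalIntegral.integral_of_le hτ, convolution_def, ContinuousLinearMap.lsmul_apply,
    smul_eq_mul]
  rw [integral_integral_swap hint, hslice, integral_indicator measurableSet_Ioc]

lemma causalConv_eq_integral (hK : Integrable K) (hV : Integrable V)
    (hK0 : ∀ r ≤ 0, K r = 0) (hV0 : ∀ s ≤ 0, V s = 0)
    (hk : ∀ t ∈ Icc (0 : ℝ) T, k t = k 0 + ∫ s in (0 : ℝ)..t, K s) {τ : ℝ} (hτ : τ ∈ Icc 0 T) :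
    causalConv k V τ = ∫ σ in (0 : ℝ)..τ, (k 0 * V σ + (V ⋆ K) σ) := by
  have hprim : Continuous fun s => ∫ r in (0 : ℝ)..τ - s, K r :=
    (intervalIntegral.continuous_primitive (fun _ _ => hK.intervalIntegrable) 0).comp
      (continuous_const.sub continuous_id)
  have hkV : EqOn (fun s => k (τ - s) * V s)
      (fun s => k 0 * V s + V s * ∫ r in (0 : ℝ)..τ - s, K r) (uIcc 0 τ) := by
    intro s hs
    rw [uIcc_of_le hτ.1] at hs
    dsimp only
    rw [hk (τ - s) ⟨by linarith [hs.2], by linarith [hs.1, hτ.2]⟩]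
    ring
  rw [causalConv, intervalIntegral.integral_congr hkV,
    intervalIntegral.integral_add (hV.intervalIntegrable.const_mul _)
      (hV.intervalIntegrable.mul_continuousOn hprim.continuousOn),
    intervalIntegral.integral_add (hV.intervalIntegrable.const_mul _)
      (hV.integrable_convolution _ hK).intervalIntegrable,
    integral_convolution_eq_integral_mul_primitive hK hV hK0 hV0 hτ.1]

lemma ae_hasDerivAt_causalConv (hK : Integrable K) (hV : Integrable V)
    (hK0 : ∀ r ≤ 0, K r = 0) (hV0 : ∀ s ≤ 0, V s = 0)
    (hk : ∀ t ∈ Icc (0 : ℝ) T, k t = k 0 + ∫ s in (0 : ℝ)..t, K s) :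
    ∀ᵐ t, t ∈ Ioo 0 T → HasDerivAt (causalConv k V) (k 0 * V t + (V ⋆ K) t) t := by
  have hint : Integrable fun σ => k 0 * V σ + (V ⋆ K) σ :=
    (hV.const_mul _).add (hV.integrable_convolution _ hK)
  filter_upwards [LocallyIntegrable.ae_hasDerivAt_integral hint.locallyIntegrable] with t hderiv ht
  refine (hderiv 0).congr_of_eventuallyEq ?_
  filter_upwards [Ioo_mem_nhds ht.1 ht.2] with τ hτ
  exact causalConv_eq_integral hK hV hK0 hV0 hk (Ioo_subset_Icc_self hτ)

lemma negPart_mul_convolution_le {c t : ℝ} (hK : Integrable K) (hK_nonpos : ∀ᵐ r, K r ≤ 0)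
    (hmass : 0 ≤ c + ∫ r, K r)
    (hV : ConvolutionExistsAt V K t (ContinuousLinearMap.lsmul ℝ ℝ))
    (hW : ConvolutionExistsAt (fun s => max (-V s) 0 ^ 2) K t (ContinuousLinearMap.lsmul ℝ ℝ)) :
    max (-V t) 0 * (c * V t + (V ⋆ K) t)
      ≤ -((1 / 2) * (c * max (-V t) 0 ^ 2 + ((fun s => max (-V s) 0 ^ 2) ⋆ K) t)) := by
  set a := max (-V t) 0
  simp only [ConvolutionExistsAt, ContinuousLinearMap.lsmul_apply, smul_eq_mul] at hV hW
  simp only [convolution_def, ContinuousLinearMap.lsmul_apply, smul_eq_mul]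
  have hKt : Integrable fun s => K (t - s) := hK.comp_sub_left t
  have hconv : a * ∫ s, V s * K (t - s)
      ≤ -(1 / 2) * ((∫ s, max (-V s) 0 ^ 2 * K (t - s)) + a ^ 2 * ∫ r, K r) := by
    rw [← integral_const_mul, ← integral_sub_left_eq_self K volume t, ← integral_const_mul,
      ← integral_add hW (hKt.const_mul _), ← integral_const_mul]
    refine integral_mono_ae (hV.const_mul a) ((hW.add (hKt.const_mul _)).const_mul _) ?_
    filter_upwards [(Measure.measurePreserving_sub_left volume t).quasiMeasurePreserving.ae
      hK_nonpos] with s hs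
    exact mul_mul_le_of_nonneg_of_nonpos (V s) (le_max_right _ _) hs
  have haV : a * V t = -a ^ 2 := by
    rcases max_cases (-V t) 0 with ⟨h, _⟩ | ⟨h, _⟩ <;> simp only [a, h] <;> ring
  calc a * (c * V t + ∫ s, V s * K (t - s))
      = -(c * a ^ 2) + a * ∫ s, V s * K (t - s) := by rw [mul_add, mul_left_comm, haV]; ring
    _ ≤ _ := by nlinarith [mul_nonneg (sq_nonneg a) hmass]

lemma ae_negPart_mul_deriv_causalConv_le (hK : Integrable K) (hV : Integrable V)
    (hV2 : MemLp V 2) (hK0 : ∀ r ≤ 0, K r = 0) (hV0 : ∀ s ≤ 0, V s = 0)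
    (hk : ∀ t ∈ Icc (0 : ℝ) T, k t = k 0 + ∫ s in (0 : ℝ)..t, K s)
    (hK_nonpos : ∀ᵐ r, K r ≤ 0) (hmass : 0 ≤ k 0 + ∫ r, K r) :
    ∀ᵐ t, t ∈ Ioo 0 T → max (-V t) 0 * deriv (causalConv k V) t
      ≤ -(1 / 2 * deriv (causalConv k fun s => max (-V s) 0 ^ 2) t) := by
  have hW := hV2.integrable_negPart_sq
  have hW0 : ∀ s ≤ 0, max (-V s) 0 ^ 2 = 0 := fun s hs => by simp [hV0 s hs]
  filter_upwards [ae_hasDerivAt_causalConv hK hV hK0 hV0 hk,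
    ae_hasDerivAt_causalConv hK hW hK0 hW0 hk,
    hV.ae_convolution_exists (ContinuousLinearMap.lsmul ℝ ℝ) hK,
    hW.ae_convolution_exists (ContinuousLinearMap.lsmul ℝ ℝ) hK] with t hdV hdW hcV hcW ht
  rw [(hdV ht).deriv, (hdW ht).deriv]
  exact negPart_mul_convolution_le hK hK_nonpos hmass hcV hcW

end KernelDerivative

lemma ae_negPart_mul_deriv_causalConv_le_of_antitoneOn {k k' V : ℝ → ℝ} {T : ℝ} (hT : 0 < T)
    (hk'int : IntegrableOn k' (Icc 0 T))
    (hkac : ∀ t ∈ Icc (0 : ℝ) T, k t = k 0 + ∫ s in (0 : ℝ)..t, k' s) (hkT : 0 ≤ k T)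
    (hkmono : AntitoneOn k (Icc 0 T)) (hV : Integrable V) (hV2 : MemLp V 2)
    (hV0 : ∀ s ≤ 0, V s = 0) :
    ∀ᵐ t, t ∈ Ioo 0 T → max (-V t) 0 * deriv (causalConv k V) t
      ≤ -(1 / 2 * deriv (causalConv k fun s => max (-V s) 0 ^ 2) t) := by
  -- Extending by zero off `Ioc 0 T` rather than `Icc 0 T` makes `K` vanish on all of `Iic 0`.
  set K := indicator (Ioc 0 T) k'
  have hK : Integrable K :=
    (integrable_indicator_iff measurableSet_Ioc).2 (hk'int.mono_set Ioc_subset_Icc_self)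
  have hK0 : ∀ r ≤ 0, K r = 0 := fun r hr => indicator_of_notMem (fun h => not_lt.2 hr h.1) k'
  have hkK : ∀ t ∈ Icc (0 : ℝ) T, k t = k 0 + ∫ s in (0 : ℝ)..t, K s := by
    intro t ht
    rw [hkac t ht, intervalIntegral.integral_congr_ae (Eventually.of_forall fun s hs => ?_)]
    rw [uIoc_of_le ht.1] at hs
    exact (indicator_of_mem (show s ∈ Ioc 0 T from ⟨hs.1, hs.2.trans ht.2⟩) k').symm
  have hK_nonpos : ∀ᵐ r, K r ≤ 0 := by
    filter_upwards [ae_nonpos_of_antitoneOn_primitive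
      ((intervalIntegrable_iff_integrableOn_Icc_of_le hT.le).2 hk'int) hkac hkmono] with r hr
    exact indicator_apply_nonpos fun hrT => hr (Ioc_subset_Icc_self hrT)
  have hmass : 0 ≤ k 0 + ∫ r, K r := by
    rwa [integral_indicator measurableSet_Ioc, ← intervalIntegral.integral_of_le hT.le,
      ← hkac T (right_mem_Icc.2 hT.le)]
  exact ae_negPart_mul_deriv_causalConv_le hK hV hV2 hK0 hV0 hkK hK_nonpos hmass

/-- Let `k ∈ W^{1,1}([0,T])` be nonnegative and nonincreasing on `[0,T]`,
and `u ∈ L²([0,T])`. Then for a.e. `t ∈ (0,T)`: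
`u(t)⁻ (k*u)'(t) ≤ -(1/2) (k*(u⁻)²)'(t)`, where `y⁻ = max (-y) 0`. -/
theorem statement2
    (T : ℝ) (hT : 0 < T)
    (k k' : ℝ → ℝ)
    (hk'int : IntegrableOn k' (Icc 0 T))
    (hkac : ∀ t ∈ Icc (0 : ℝ) T, k t = k 0 + ∫ s in (0 : ℝ)..t, k' s)
    (hknonneg : ∀ t ∈ Icc (0 : ℝ) T, 0 ≤ k t)
    (hkmono : AntitoneOn k (Icc 0 T))
    (u : ℝ → ℝ) (hu : MemLp u 2 (volume.restrict (Icc 0 T))) :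
    ∀ᵐ t ∂(volume.restrict (Ioo 0 T)),
      max (-(u t)) 0 * deriv (fun τ => ∫ s in (0 : ℝ)..τ, k (τ - s) * u s) t
        ≤ -((1 / 2) * deriv (fun τ => ∫ s in (0 : ℝ)..τ, k (τ - s) * (max (-(u s)) 0) ^ 2) t) := by
  set V := indicator (Ioc 0 T) u
  have hV : Integrable V := (integrable_indicator_iff measurableSet_Ioc).2
    (IntegrableOn.mono_set (μ := volume) (hu.integrable one_le_two) Ioc_subset_Icc_self)
  have hV2 : MemLp V 2 := (memLp_indicator_iff_restrict measurableSet_Ioc).2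
    (hu.mono_measure (Measure.restrict_mono Ioc_subset_Icc_self le_rfl))
  have hV0 : ∀ s ≤ 0, V s = 0 := fun s hs => indicator_of_notMem (fun h => not_lt.2 hs h.1) u
  have hu_eq : EqOn u V (Ioc 0 T) := fun s hs => (indicator_of_mem hs u).symm
  have hw_eq : EqOn (fun s => max (-u s) 0 ^ 2) (fun s => max (-V s) 0 ^ 2) (Ioc 0 T) :=
    fun s hs => by simp only [hu_eq hs]
  rw [ae_restrict_iff' measurableSet_Ioo]
  filter_upwards [ae_negPart_mul_deriv_causalConv_le_of_antitoneOn hT hk'int hkac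
    (hknonneg T (right_mem_Icc.2 hT.le)) hkmono hV hV2 hV0] with t hineq ht
  change max (-u t) 0 * deriv (causalConv k u) t
    ≤ -(1 / 2 * deriv (causalConv k fun s => max (-u s) 0 ^ 2) t)
  rw [(causalConv_eventuallyEq hu_eq ht).deriv_eq, (causalConv_eventuallyEq hw_eq ht).deriv_eq,
    hu_eq (Ioo_subset_Ioc_self ht)]
  exact hineq ht
end

section
/- Let T>0 and α ∈ (0,1). Suppose v : [0,T] → ℝ is absolutely continuous with v(0) = 0, v̇ ∈ L¹([0,T]) and v ≥ 0 on [0,T], and let φ ∈ C¹([0,T]) be nondecreasing. Then for almost every t ∈ (0,T): (g_α*(φ·v̇))(t) ≥ φ(t)·(g_α*v̇)(t) − ∫₀ᵗ g_α(t−σ)·φ̇(σ)·v(σ) dσ. -/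
open MeasureTheory Set

/-- The standard kernel `g_γ(t) = t^{γ-1}/Γ(γ)`. -/
noncomputable def gker (γ t : ℝ) : ℝ := t ^ (γ - 1) / Real.Gamma γ

/-!
Write `F(u) = ∫₀ᵘ g_α(t - s) v'(s) ds`. Integrating the product rule over the triangle
`0 < s < u < t` (Fubini) turns `φ(t) (g_α * v')(t) - (g_α * (φ v'))(t)` into `∫₀ᵗ φ'(u) F(u) du`.
The same identity with `g_α(t - ·)` in place of `φ` on `[0, u]` gives
`g_α(t - u) v(u) - F(u) = ∫₀ᵘ ∂ₛ g_α(t - s) v(s) ds ≥ 0`, because the kernel is nondecreasing in `s`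
for `α ≤ 1` and `v ≥ 0`. Since `φ' ≥ 0`, the claim follows for every `t` at which the
convolution integral `g_α * v'` converges, i.e. almost everywhere.
-/

section TriangleFubini

variable {a b : ℝ} {f g : ℝ → ℝ}

noncomputable def triangleMul (f g : ℝ → ℝ) : ℝ × ℝ → ℝ :=
  {p : ℝ × ℝ | p.1 < p.2}.indicator fun p => f p.1 * g p.2

theorem integrable_triangleMul (hf : IntegrableOn f (Ioc a b)) (hg : IntegrableOn g (Ioc a b)) :
    Integrable (triangleMul f g) ((volume.restrict (Ioc a b)).prod (volume.restrict (Ioc a b))) :=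
  (hf.mul_prod hg).indicator (measurableSet_lt measurable_fst measurable_snd)

theorem integral_triangleMul_left {s : ℝ} (hs : s ∈ Ioc a b) :
    ∫ u, triangleMul f g (s, u) ∂volume.restrict (Ioc a b) = f s * ∫ u in Ioc s b, g u := by
  have hslice : (fun u => triangleMul f g (s, u)) = fun u => f s * (Ioi s).indicator g u := by
    ext u; by_cases h : s < u <;> simp [triangleMul, h, indicator]
  rw [hslice, integral_const_mul, integral_indicator measurableSet_Ioi,
    Measure.restrict_restrict measurableSet_Ioi, inter_comm, Ioc_inter_Ioi, sup_eq_right.2 hs.1.le]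

theorem integral_triangleMul_right {u : ℝ} (hu : u ∈ Ioc a b) :
    ∫ s, triangleMul f g (s, u) ∂volume.restrict (Ioc a b) = g u * ∫ s in Ioc a u, f s := by
  have hslice : (fun s => triangleMul f g (s, u)) = fun s => (Iio u).indicator f s * g u := by
    ext s; by_cases h : s < u <;> simp [triangleMul, h, indicator]
  rw [hslice, integral_mul_const, mul_comm, integral_indicator measurableSet_Iio,
    Measure.restrict_restrict measurableSet_Iio, integral_Ioc_eq_integral_Ioo]
  congr 3
  ext s
  simp only [mem_inter_iff, mem_Iio, mem_Ioc, mem_Ioo]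
  grind

theorem integrableOn_mul_integral_Ioc (hf : IntegrableOn f (Ioc a b))
    (hg : IntegrableOn g (Ioc a b)) :
    IntegrableOn (fun u => g u * ∫ s in Ioc a u, f s) (Ioc a b) :=
  (integrable_triangleMul hf hg).integral_prod_right.congr
    ((ae_restrict_mem measurableSet_Ioc).mono fun _ => integral_triangleMul_right)

theorem integral_mul_integral_Ioc_swap (hf : IntegrableOn f (Ioc a b))
    (hg : IntegrableOn g (Ioc a b)) :
    ∫ s in Ioc a b, f s * ∫ u in Ioc s b, g u = ∫ u in Ioc a b, g u * ∫ s in Ioc a u, f s := by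
  calc ∫ s in Ioc a b, f s * ∫ u in Ioc s b, g u
      = ∫ s in Ioc a b, ∫ u in Ioc a b, triangleMul f g (s, u) :=
        integral_congr_ae ((ae_restrict_mem measurableSet_Ioc).mono
          fun _ hs => (integral_triangleMul_left hs).symm)
    _ = ∫ u in Ioc a b, ∫ s in Ioc a b, triangleMul f g (s, u) :=
        integral_integral_swap (integrable_triangleMul hf hg)
    _ = ∫ u in Ioc a b, g u * ∫ s in Ioc a u, f s :=
        integral_congr_ae ((ae_restrict_mem measurableSet_Ioc).mono
          fun _ => integral_triangleMul_right)

theorem IntegrableOn.continuousOn_mul_Ioc {k : ℝ → ℝ} (hk : ContinuousOn k (Icc a b))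
    (hf : IntegrableOn f (Ioc a b)) : IntegrableOn (fun x => k x * f x) (Ioc a b) :=
  (((integrableOn_Icc_iff_integrableOn_Ioc).2 hf).continuousOn_mul hk isCompact_Icc).mono_set
    Ioc_subset_Icc_self

theorem integral_sub_mul_eq_integral_deriv_mul_primitive {k k' : ℝ → ℝ}
    (hk : ∀ x ∈ Icc a b, HasDerivAt k (k' x) x) (hk' : IntegrableOn k' (Ioc a b))
    (hf : IntegrableOn f (Ioc a b)) :
    ∫ s in Ioc a b, (k b - k s) * f s = ∫ u in Ioc a b, k' u * ∫ s in Ioc a u, f s := by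
  have hftc : ∀ s ∈ Ioc a b, ∫ u in Ioc s b, k' u = k b - k s := fun s hs => by
    have hsub : Icc s b ⊆ Icc a b := Icc_subset_Icc_left hs.1.le
    rw [← intervalIntegral.integral_of_le hs.2]
    refine intervalIntegral.integral_eq_sub_of_hasDerivAt
      (fun x hx => hk x (hsub (uIcc_of_le hs.2 ▸ hx))) ?_
    exact (intervalIntegrable_iff_integrableOn_Ioc_of_le hs.2).2
      (hk'.mono_set (Ioc_subset_Ioc_left hs.1.le))
  rw [← integral_mul_integral_Ioc_swap hf hk']
  refine setIntegral_congr_fun measurableSet_Ioc fun s hs => ?_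
  rw [hftc s hs, mul_comm]

theorem integral_mul_le_mul_integral_of_deriv_nonneg {k k' : ℝ → ℝ}
    (hk : ∀ x ∈ Icc a b, HasDerivAt k (k' x) x) (hk' : IntegrableOn k' (Ioc a b))
    (hk'_nonneg : ∀ x ∈ Ioc a b, 0 ≤ k' x) (hf : IntegrableOn f (Ioc a b))
    (hF : ∀ u ∈ Ioc a b, 0 ≤ ∫ s in Ioc a u, f s) :
    ∫ s in Ioc a b, k s * f s ≤ k b * ∫ s in Ioc a b, f s := by
  have hkf : IntegrableOn (fun s => k s * f s) (Ioc a b) :=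
    IntegrableOn.continuousOn_mul_Ioc (fun x hx => (hk x hx).continuousAt.continuousWithinAt) hf
  have hdiff : k b * (∫ s in Ioc a b, f s) - ∫ s in Ioc a b, k s * f s
      = ∫ u in Ioc a b, k' u * ∫ s in Ioc a u, f s := by
    rw [← integral_const_mul, ← integral_sub (hf.const_mul (k b)) hkf,
      ← integral_sub_mul_eq_integral_deriv_mul_primitive hk hk' hf]
    exact setIntegral_congr_fun measurableSet_Ioc fun s _ => by ring
  have hnonneg : 0 ≤ ∫ u in Ioc a b, k' u * ∫ s in Ioc a u, f s :=
    setIntegral_nonneg measurableSet_Ioc fun u hu => mul_nonneg (hk'_nonneg u hu) (hF u hu)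
  linarith

theorem mul_integral_sub_integral_mul_le {φ φ' w : ℝ → ℝ}
    (hφ : ∀ x ∈ Icc a b, HasDerivAt φ (φ' x) x) (hφ' : ContinuousOn φ' (Icc a b))
    (hφ'_nonneg : ∀ x ∈ Ioo a b, 0 ≤ φ' x) (hf : IntegrableOn f (Ioc a b))
    (hw : IntegrableOn w (Ioc a b)) (hbound : ∀ u ∈ Ioo a b, ∫ s in Ioc a u, f s ≤ w u) :
    φ b * (∫ s in Ioc a b, f s) - ∫ s in Ioc a b, φ s * f s ≤ ∫ u in Ioc a b, φ' u * w u := by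
  have hφ'_int : IntegrableOn φ' (Ioc a b) := hφ'.integrableOn_Icc.mono_set Ioc_subset_Icc_self
  have hφf : IntegrableOn (fun s => φ s * f s) (Ioc a b) :=
    IntegrableOn.continuousOn_mul_Ioc (fun x hx => (hφ x hx).continuousAt.continuousWithinAt) hf
  have hdiff : φ b * (∫ s in Ioc a b, f s) - ∫ s in Ioc a b, φ s * f s
      = ∫ u in Ioc a b, φ' u * ∫ s in Ioc a u, f s := by
    rw [← integral_const_mul (φ b) f, ← integral_sub (hf.const_mul _) hφf,
      ← integral_sub_mul_eq_integral_deriv_mul_primitive hφ hφ'_int hf]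
    exact setIntegral_congr_fun measurableSet_Ioc fun s _ => by ring
  rw [hdiff, integral_Ioc_eq_integral_Ioo, integral_Ioc_eq_integral_Ioo]
  exact setIntegral_mono_on
    ((integrableOn_mul_integral_Ioc hf hφ'_int).mono_set Ioo_subset_Ioc_self)
    ((IntegrableOn.continuousOn_mul_Ioc hφ' hw).mono_set Ioo_subset_Ioc_self) measurableSet_Ioo
    fun u hu => mul_le_mul_of_nonneg_left (hbound u hu) (hφ'_nonneg u hu)

end TriangleFubini

theorem ae_integrableOn_mul_comp_sub {K f : ℝ → ℝ} {T : ℝ} (hK : IntegrableOn K (Ioc 0 T))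
    (hf : IntegrableOn f (Ioc 0 T)) :
    ∀ᵐ t, t ≤ T → IntegrableOn (fun s => K (t - s) * f s) (Ioc 0 t) := by
  have hconv := ((integrable_indicator_iff measurableSet_Ioc).2 hf).ae_convolution_exists
    (L := ContinuousLinearMap.mul ℝ ℝ) ((integrable_indicator_iff measurableSet_Ioc).2 hK)
  filter_upwards [hconv] with t ht htT
  refine (IntegrableOn.congr_fun ht.integrableOn (fun s hs => ?_) measurableSet_Ioo).congr_set_ae
    Ioo_ae_eq_Ioc.symm
  have hs_mem : s ∈ Ioc 0 T := ⟨hs.1, (hs.2.trans_le htT).le⟩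
  have hts_mem : t - s ∈ Ioc 0 T := ⟨by linarith [hs.2], by linarith [hs.1]⟩
  simp only [ContinuousLinearMap.mul_apply', indicator_of_mem hs_mem,
    indicator_of_mem hts_mem, mul_comm]

theorem HasDerivAt.nonneg_of_monotoneOn_Icc {φ : ℝ → ℝ} {φ' a b x : ℝ}
    (hφ : HasDerivAt φ φ' x) (hmono : MonotoneOn φ (Icc a b)) (hx : x ∈ Ioo a b) : 0 ≤ φ' := by
  have hacc : AccPt x (Filter.principal (Icc a b)) := by
    simpa using (PerfectSpace.univ_preperfect x (mem_univ x)).nhds_inter (Icc_mem_nhds hx.1 hx.2)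
  exact hφ.hasDerivWithinAt.nonneg_of_monotoneOn hacc hmono

section Kernel

variable {α : ℝ}

theorem intervalIntegrable_gker (hα : 0 < α) (a b : ℝ) : IntervalIntegrable (gker α) volume a b :=
  (intervalIntegral.intervalIntegrable_rpow' (by linarith)).div_const _

theorem integrableOn_gker_sub (hα : 0 < α) (t : ℝ) :
    IntegrableOn (fun s => gker α (t - s)) (Ioc 0 t) := by
  simpa using ((intervalIntegrable_gker hα 0 t).comp_sub_left t).def'.mono_set Ioc_subset_uIoc'

theorem hasDerivAt_gker_sub {s t : ℝ} (hst : s < t) :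
    HasDerivAt (fun x => gker α (t - x)) ((1 - α) * (t - s) ^ (α - 2) / Real.Gamma α) s := by
  have h := ((Real.hasDerivAt_rpow_const (p := α - 1) (Or.inl (sub_pos.2 hst).ne')).comp s
    ((hasDerivAt_id s).const_sub t)).div_const (Real.Gamma α)
  rw [show α - 1 - 1 = α - 2 by ring] at h
  exact h.congr_deriv (by ring)

theorem integral_gker_sub_mul_le (hα₀ : 0 < α) (hα₁ : α ≤ 1) {a σ t : ℝ} {v v' : ℝ → ℝ}
    (haσ : a ≤ σ) (hσt : σ < t) (hv' : IntegrableOn v' (Ioc a σ))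
    (hv : ∀ x ∈ Icc a σ, v x = ∫ s in a..x, v' s) (hv_nonneg : ∀ x ∈ Icc a σ, 0 ≤ v x) :
    ∫ s in Ioc a σ, gker α (t - s) * v' s ≤ gker α (t - σ) * v σ := by
  have hprimitive : ∀ x ∈ Icc a σ, ∫ s in Ioc a x, v' s = v x := fun x hx => by
    rw [hv x hx, intervalIntegral.integral_of_le hx.1]
  have hcont : ContinuousOn (fun x => (1 - α) * (t - x) ^ (α - 2) / Real.Gamma α) (Icc a σ) :=
    (continuousOn_const.mul ((continuousOn_const.sub continuousOn_id).rpow_const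
      fun x hx => Or.inl (sub_pos.2 (hx.2.trans_lt hσt)).ne')).div_const _
  rw [← hprimitive σ ⟨haσ, le_rfl⟩]
  refine integral_mul_le_mul_integral_of_deriv_nonneg
    (fun x hx => hasDerivAt_gker_sub (hx.2.trans_lt hσt))
    (hcont.integrableOn_Icc.mono_set Ioc_subset_Icc_self) (fun x hx => ?_) hv'
    fun u hu => (hprimitive u (Ioc_subset_Icc_self hu)).symm ▸ hv_nonneg u (Ioc_subset_Icc_self hu)
  have := Real.Gamma_pos_of_pos hα₀
  have := Real.rpow_nonneg (sub_pos.2 (hx.2.trans_lt hσt)).le (α - 2)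
  have : 0 ≤ 1 - α := by linarith
  positivity

end Kernel

theorem statement4_general
    (T : ℝ) (α : ℝ) (hα : α ∈ Ioo (0 : ℝ) 1)
    (v v' : ℝ → ℝ)
    (hv'int : IntegrableOn v' (Icc 0 T))
    (hvac : ∀ t ∈ Icc (0 : ℝ) T, v t = ∫ s in (0 : ℝ)..t, v' s)
    (hvnonneg : ∀ t ∈ Icc (0 : ℝ) T, 0 ≤ v t)
    (φ φ' : ℝ → ℝ)
    (hφ : ∀ t ∈ Icc (0 : ℝ) T, HasDerivAt φ (φ' t) t)
    (hφ' : ContinuousOn φ' (Icc 0 T))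
    (hφmono : MonotoneOn φ (Icc 0 T)) :
    ∀ᵐ t ∂(volume.restrict (Ioo 0 T)),
      φ t * (∫ s in (0 : ℝ)..t, gker α (t - s) * v' s)
          - (∫ σ in (0 : ℝ)..t, gker α (t - σ) * φ' σ * v σ)
        ≤ ∫ s in (0 : ℝ)..t, gker α (t - s) * (φ s * v' s) := by
  obtain ⟨hα₀, hα₁⟩ := hα
  have hconv := ae_integrableOn_mul_comp_sub
    ((intervalIntegrable_gker hα₀ 0 T).def'.mono_set Ioc_subset_uIoc)
    (hv'int.mono_set Ioc_subset_Icc_self)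
  filter_upwards [ae_restrict_of_ae hconv, ae_restrict_mem measurableSet_Ioo] with t hint ht
  have hIcc : Icc 0 t ⊆ Icc 0 T := Icc_subset_Icc_right ht.2.le
  have hv_cont : ContinuousOn v (Icc 0 t) :=
    (intervalIntegral.continuousOn_primitive (hv'int.mono_set hIcc)).congr fun x hx => by
      rw [hvac x (hIcc hx), intervalIntegral.integral_of_le hx.1]
  have hw : IntegrableOn (fun u => gker α (t - u) * v u) (Ioc 0 t) :=
    (IntegrableOn.continuousOn_mul_Ioc hv_cont (integrableOn_gker_sub hα₀ t)).congr_fun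
      (fun _ _ => mul_comm _ _) measurableSet_Ioc
  have hkey := mul_integral_sub_integral_mul_le (fun x hx => hφ x (hIcc hx)) (hφ'.mono hIcc)
    (fun x hx => (hφ x (hIcc (Ioo_subset_Icc_self hx))).nonneg_of_monotoneOn_Icc hφmono
      ⟨hx.1, hx.2.trans ht.2⟩)
    (hint ht.2.le)
    hw fun u hu => integral_gker_sub_mul_le hα₀ hα₁.le hu.1.le hu.2
      (hv'int.mono_set ((Ioc_subset_Icc_self.trans (Icc_subset_Icc_right hu.2.le)).trans hIcc))
      (fun x hx => hvac x (hIcc ⟨hx.1, hx.2.trans hu.2.le⟩))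
      (fun x hx => hvnonneg x (hIcc ⟨hx.1, hx.2.trans hu.2.le⟩))
  have hlhs : ∫ s in Ioc 0 t, φ s * (gker α (t - s) * v' s)
      = ∫ s in Ioc 0 t, gker α (t - s) * (φ s * v' s) :=
    setIntegral_congr_fun measurableSet_Ioc fun s _ => by ring
  have hrhs : ∫ u in Ioc 0 t, φ' u * (gker α (t - u) * v u)
      = ∫ u in Ioc 0 t, gker α (t - u) * φ' u * v u :=
    setIntegral_congr_fun measurableSet_Ioc fun s _ => by ring
  simp only [intervalIntegral.integral_of_le ht.1.le]
  linarith

/-- Let `T > 0`, `α ∈ (0,1)`, let `v : [0,T] → ℝ` be absolutely continuous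
with `v(0) = 0`, `v' ∈ L¹([0,T])` and `v ≥ 0` on `[0,T]`, and let `φ ∈ C¹([0,T])` be
nondecreasing. Then for a.e. `t ∈ (0,T)`:
`(g_α*(φ v'))(t) ≥ φ(t)(g_α*v')(t) - ∫₀ᵗ g_α(t-σ) φ'(σ) v(σ) dσ`. -/
theorem statement4
    (T : ℝ) (hT : 0 < T) (α : ℝ) (hα : α ∈ Ioo (0 : ℝ) 1)
    (v v' : ℝ → ℝ)
    (hv'int : IntegrableOn v' (Icc 0 T))
    (hv0 : v 0 = 0)
    (hvac : ∀ t ∈ Icc (0 : ℝ) T, v t = ∫ s in (0 : ℝ)..t, v' s)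
    (hvnonneg : ∀ t ∈ Icc (0 : ℝ) T, 0 ≤ v t)
    (φ φ' : ℝ → ℝ)
    (hφ : ∀ t ∈ Icc (0 : ℝ) T, HasDerivAt φ (φ' t) t)
    (hφ' : ContinuousOn φ' (Icc 0 T))
    (hφmono : MonotoneOn φ (Icc 0 T)) :
    ∀ᵐ t ∂(volume.restrict (Ioo 0 T)),
      φ t * (∫ s in (0 : ℝ)..t, gker α (t - s) * v' s)
          - (∫ σ in (0 : ℝ)..t, gker α (t - σ) * φ' σ * v σ)
        ≤ ∫ s in (0 : ℝ)..t, gker α (t - s) * (φ s * v' s) :=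
  statement4_general T α hα v v' hv'int hvac hvnonneg φ φ' hφ hφ' hφmono
end

section
/- Let T>0, let k ∈ W^{1,1}([0,T]) (k absolutely continuous with k̇ ∈ L¹([0,T])), let v ∈ L¹([0,T]) and φ ∈ C¹([0,T]). Then for almost every t ∈ (0,T): φ(t)·(d/dt)(k*v)(t) = (d/dt)(k*(φ·v))(t) + ∫₀ᵗ k̇(t−σ)·(φ(t)−φ(σ))·v(σ) dσ. -/
open MeasureTheory Set Filter
open scoped Topology Convolution

/-!
Write `k t = k 0 + ∫₀ᵗ k'` and extend `k'` and `v` by zero outside `(0, T]`. By Fubini, the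
convolution `(k * v)(τ)` becomes `k 0 * ∫₀^τ v + ∫₀^τ (k' * v)`, so the Lebesgue
differentiation theorem gives `(k * v)' = k 0 * v + k' * v` almost everywhere on `(0, T)`.
Applied to `v` and to `φ v`, this reduces the identity to
`φ t * (k' * v)(t) - (k' * (φ v))(t) = ∫₀ᵗ k'(t - σ) (φ t - φ σ) v σ dσ`.
-/

noncomputable def volterraConv (k v : ℝ → ℝ) : ℝ → ℝ :=
  fun t => ∫ s in (0 : ℝ)..t, k (t - s) * v s

theorem intervalIntegral_convolution_eq_of_nonpos_eq_zero {f g : ℝ → ℝ} (hf : Integrable f)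
    (hg : Integrable g) (hf0 : ∀ x ≤ 0, f x = 0) (hg0 : ∀ x ≤ 0, g x = 0) {τ : ℝ}
    (hτ : 0 ≤ τ) :
    ∫ u in (0 : ℝ)..τ, (g ⋆ f) u = ∫ s in (0 : ℝ)..τ, g s * ∫ u in (0 : ℝ)..τ - s, f u := by
  have hprod : Integrable (fun p : ℝ × ℝ => g p.2 * f (p.1 - p.2))
      ((volume.restrict (Ioc 0 τ)).prod volume) := by
    rw [Measure.restrict_prod_eq_prod_univ]
    simpa using (hg.convolution_integrand (ContinuousLinearMap.lsmul ℝ ℝ) hf).restrict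
  have hf_primitive (s : ℝ) (hs : 0 ≤ s) :
      ∫ u in (0 : ℝ)..τ, f (u - s) = ∫ u in (0 : ℝ)..τ - s, f u := by
    rw [intervalIntegral.integral_comp_sub_right,
      ← intervalIntegral.integral_add_adjacent_intervals (b := 0) hf.intervalIntegrable
        hf.intervalIntegrable, zero_sub,
      intervalIntegral.integral_congr (g := fun _ => 0) fun u hu => hf0 u ?_,
      intervalIntegral.integral_zero, zero_add]
    rw [uIcc_of_le (by linarith)] at hu
    exact hu.2
  calc ∫ u in (0 : ℝ)..τ, (g ⋆ f) u
      = ∫ u in Ioc 0 τ, ∫ s, g s * f (u - s) := by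
        simp only [intervalIntegral.integral_of_le hτ, convolution_lsmul, smul_eq_mul]
    _ = ∫ s, ∫ u in Ioc 0 τ, g s * f (u - s) := integral_integral_swap hprod
    _ = ∫ s, g s * ∫ u in (0 : ℝ)..τ - s, f u := by
        congr 1 with s
        rcases le_or_gt s 0 with hs | hs
        · simp [hg0 s hs]
        · rw [integral_const_mul, ← intervalIntegral.integral_of_le hτ, hf_primitive s hs.le]
    _ = ∫ s in (0 : ℝ)..τ, g s * ∫ u in (0 : ℝ)..τ - s, f u := by
        rw [intervalIntegral.integral_of_le hτ]
        refine (setIntegral_eq_integral_of_forall_compl_eq_zero fun s hs => ?_).symm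
        rcases le_or_gt s 0 with hs0 | hs0
        · rw [hg0 s hs0, zero_mul]
        · have hτs : τ - s < 0 := by
            by_contra! h
            exact hs ⟨hs0, by linarith⟩
          rw [intervalIntegral.integral_symm, intervalIntegral.integral_congr (g := fun _ => 0)
            fun u hu => hf0 u ?_, intervalIntegral.integral_zero, neg_zero, mul_zero]
          rw [uIcc_of_le hτs.le] at hu
          exact hu.2

section VolterraConvolution

variable {T : ℝ} {k k' v : ℝ → ℝ}

theorem eq_add_integral_indicator_of_eq_add_integral
    (hkac : ∀ t ∈ Icc (0 : ℝ) T, k t = k 0 + ∫ s in (0 : ℝ)..t, k' s) {x : ℝ}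
    (hx : x ∈ Icc 0 T) : k x = k 0 + ∫ u in (0 : ℝ)..x, (Ioc 0 T).indicator k' u := by
  rw [hkac x hx, intervalIntegral.integral_congr_ae (Eventually.of_forall fun u hu => ?_)]
  rw [uIoc_of_le hx.1] at hu
  exact (indicator_of_mem (show u ∈ Ioc 0 T from ⟨hu.1, hu.2.trans hx.2⟩) k').symm

theorem volterraConv_eq_add_integral_convolution
    (hk' : IntegrableOn k' (Icc 0 T))
    (hkac : ∀ t ∈ Icc (0 : ℝ) T, k t = k 0 + ∫ s in (0 : ℝ)..t, k' s)
    (hv : IntegrableOn v (Icc 0 T)) {τ : ℝ} (hτ : τ ∈ Icc 0 T) :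
    volterraConv k v τ = k 0 * (∫ s in (0 : ℝ)..τ, (Ioc 0 T).indicator v s)
      + ∫ u in (0 : ℝ)..τ, ((Ioc 0 T).indicator v ⋆ (Ioc 0 T).indicator k') u := by
  set v₁ := (Ioc 0 T).indicator v
  set k₁ := (Ioc 0 T).indicator k'
  have hv₁ : Integrable v₁ :=
    (hv.mono_set Ioc_subset_Icc_self).integrable_indicator measurableSet_Ioc
  have hk₁ : Integrable k₁ :=
    (hk'.mono_set Ioc_subset_Icc_self).integrable_indicator measurableSet_Ioc
  have hnonpos {f : ℝ → ℝ} (x : ℝ) (hx : x ≤ 0) : (Ioc 0 T).indicator f x = 0 :=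
    indicator_of_notMem (fun h => hx.not_gt h.1) f
  have hprimitive : Continuous fun s => ∫ u in (0 : ℝ)..τ - s, k₁ u :=
    (intervalIntegral.continuous_primitive (fun _ _ => hk₁.intervalIntegrable) 0).comp
      (continuous_const.sub continuous_id)
  rw [intervalIntegral_convolution_eq_of_nonpos_eq_zero hk₁ hv₁ hnonpos hnonpos hτ.1,
    ← intervalIntegral.integral_const_mul, ← intervalIntegral.integral_add
      (hv₁.intervalIntegrable.const_mul _)
      (hv₁.intervalIntegrable.mul_continuousOn hprimitive.continuousOn)]
  refine intervalIntegral.integral_congr_ae (Eventually.of_forall fun s hs => ?_)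
  rw [uIoc_of_le hτ.1] at hs
  have hsT : s ∈ Ioc 0 T := ⟨hs.1, hs.2.trans hτ.2⟩
  rw [eq_add_integral_indicator_of_eq_add_integral hkac
    ⟨sub_nonneg.2 hs.2, by linarith [hs.1, hτ.2]⟩, show v₁ s = v s from indicator_of_mem hsT v]
  ring

theorem indicator_mul_indicator_sub {t : ℝ} (ht : t ≤ T) (s : ℝ) :
    (Ioc 0 T).indicator v s * (Ioc 0 T).indicator k' (t - s)
      = (Ioo 0 t).indicator (fun s => k' (t - s) * v s) s := by
  by_cases hs : s ∈ Ioo 0 t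
  · have hsT : s ∈ Ioc 0 T := ⟨hs.1, hs.2.le.trans ht⟩
    have htsT : t - s ∈ Ioc 0 T := ⟨sub_pos.2 hs.2, by linarith [hs.1]⟩
    rw [indicator_of_mem hs, indicator_of_mem hsT, indicator_of_mem htsT, mul_comm]
  · rw [indicator_of_notMem hs]
    rcases le_or_gt s 0 with hs0 | hs0
    · have hsT : s ∉ Ioc 0 T := fun h => hs0.not_gt h.1
      rw [indicator_of_notMem hsT, zero_mul]
    · have htsT : t - s ∉ Ioc 0 T := fun h => hs ⟨hs0, sub_pos.1 h.1⟩
      rw [indicator_of_notMem htsT, mul_zero]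

theorem indicator_convolution_indicator_eq {t : ℝ} (ht : t ∈ Icc 0 T) :
    ((Ioc 0 T).indicator v ⋆ (Ioc 0 T).indicator k') t = volterraConv k' v t := by
  simp only [convolution_lsmul, smul_eq_mul, indicator_mul_indicator_sub ht.2]
  rw [integral_indicator measurableSet_Ioo, ← integral_Ioc_eq_integral_Ioo,
    ← intervalIntegral.integral_of_le ht.1, volterraConv]

theorem intervalIntegrable_of_convolutionExistsAt_indicator {t : ℝ} (ht : t ∈ Icc 0 T)
    (h : ConvolutionExistsAt ((Ioc 0 T).indicator v) ((Ioc 0 T).indicator k') t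
      (ContinuousLinearMap.lsmul ℝ ℝ)) :
    IntervalIntegrable (fun s => k' (t - s) * v s) volume 0 t := by
  simp only [ConvolutionExistsAt, ContinuousLinearMap.lsmul_apply, smul_eq_mul,
    indicator_mul_indicator_sub ht.2] at h
  rw [intervalIntegrable_iff_integrableOn_Ioc_of_le ht.1, integrableOn_Ioc_iff_integrableOn_Ioo]
  exact (integrable_indicator_iff measurableSet_Ioo).1 h

theorem ae_hasDerivAt_volterraConv (hk' : IntegrableOn k' (Icc 0 T))
    (hkac : ∀ t ∈ Icc (0 : ℝ) T, k t = k 0 + ∫ s in (0 : ℝ)..t, k' s)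
    (hv : IntegrableOn v (Icc 0 T)) :
    ∀ᵐ t ∂volume.restrict (Ioo 0 T), IntervalIntegrable (fun s => k' (t - s) * v s) volume 0 t ∧
      HasDerivAt (volterraConv k v) (k 0 * v t + volterraConv k' v t) t := by
  set v₁ := (Ioc 0 T).indicator v
  set k₁ := (Ioc 0 T).indicator k'
  have hv₁ : Integrable v₁ :=
    (hv.mono_set Ioc_subset_Icc_self).integrable_indicator measurableSet_Ioc
  have hk₁ : Integrable k₁ :=
    (hk'.mono_set Ioc_subset_Icc_self).integrable_indicator measurableSet_Ioc
  rw [ae_restrict_iff' measurableSet_Ioo]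
  filter_upwards [LocallyIntegrable.ae_hasDerivAt_integral hv₁.locallyIntegrable,
    LocallyIntegrable.ae_hasDerivAt_integral
      (hv₁.integrable_convolution (ContinuousLinearMap.lsmul ℝ ℝ) hk₁).locallyIntegrable,
    hv₁.ae_convolution_exists (ContinuousLinearMap.lsmul ℝ ℝ) hk₁] with t hv₁t hconv hexists ht
  have htIcc : t ∈ Icc 0 T := Ioo_subset_Icc_self ht
  refine ⟨intervalIntegrable_of_convolutionExistsAt_indicator htIcc hexists, ?_⟩
  have hdecomp : volterraConv k v =ᶠ[𝓝 t]
      fun τ => k 0 * (∫ s in (0 : ℝ)..τ, v₁ s) + ∫ u in (0 : ℝ)..τ, (v₁ ⋆ k₁) u :=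
    eventually_of_mem (Ioo_mem_nhds ht.1 ht.2) fun τ hτ =>
      volterraConv_eq_add_integral_convolution hk' hkac hv (Ioo_subset_Icc_self hτ)
  have hderiv := ((hv₁t 0).const_mul (k 0)).add (hconv 0)
  rw [show v₁ t = v t from indicator_of_mem (Ioo_subset_Ioc_self ht) v,
    indicator_convolution_indicator_eq htIcc] at hderiv
  exact hderiv.congr_of_eventuallyEq hdecomp

end VolterraConvolution

theorem statement5_general
    (T : ℝ)
    (k k' : ℝ → ℝ)
    (hk'int : IntegrableOn k' (Icc 0 T))
    (hkac : ∀ t ∈ Icc (0 : ℝ) T, k t = k 0 + ∫ s in (0 : ℝ)..t, k' s)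
    (v : ℝ → ℝ) (hv : IntegrableOn v (Icc 0 T))
    (φ φ' : ℝ → ℝ)
    (hφ : ∀ t ∈ Icc (0 : ℝ) T, HasDerivAt φ (φ' t) t) :
    ∀ᵐ t ∂(volume.restrict (Ioo 0 T)),
      φ t * deriv (fun τ => ∫ s in (0 : ℝ)..τ, k (τ - s) * v s) t
        = deriv (fun τ => ∫ s in (0 : ℝ)..τ, k (τ - s) * (φ s * v s)) t
          + ∫ σ in (0 : ℝ)..t, k' (t - σ) * (φ t - φ σ) * v σ := by
  have hφv : IntegrableOn (fun s => φ s * v s) (Icc 0 T) :=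
    hv.continuousOn_mul (fun t ht => (hφ t ht).continuousAt.continuousWithinAt) isCompact_Icc
  filter_upwards [ae_hasDerivAt_volterraConv hk'int hkac hv,
    ae_hasDerivAt_volterraConv hk'int hkac hφv] with t ⟨hint, hderiv⟩ ⟨hintφ, hderivφ⟩
  have hsplit : ∫ σ in (0 : ℝ)..t, k' (t - σ) * (φ t - φ σ) * v σ
      = φ t * volterraConv k' v t - volterraConv k' (fun s => φ s * v s) t := by
    rw [volterraConv, volterraConv, ← intervalIntegral.integral_const_mul,
      ← intervalIntegral.integral_sub (hint.const_mul _) hintφ]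
    congr 1 with σ
    ring
  change φ t * deriv (volterraConv k v) t = deriv (volterraConv k fun s => φ s * v s) t + _
  rw [hderiv.deriv, hderivφ.deriv, hsplit]
  ring

/-- Let `T > 0`, `k ∈ W^{1,1}([0,T])` (with derivative `k'`),
`v ∈ L¹([0,T])` and `φ ∈ C¹([0,T])`. Then for a.e. `t ∈ (0,T)`:
`φ(t) (k*v)'(t) = (k*(φ v))'(t) + ∫₀ᵗ k'(t-σ)(φ(t)-φ(σ)) v(σ) dσ`. -/
theorem statement5
    (T : ℝ) (hT : 0 < T)
    (k k' : ℝ → ℝ)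
    (hk'int : IntegrableOn k' (Icc 0 T))
    (hkac : ∀ t ∈ Icc (0 : ℝ) T, k t = k 0 + ∫ s in (0 : ℝ)..t, k' s)
    (v : ℝ → ℝ) (hv : IntegrableOn v (Icc 0 T))
    (φ φ' : ℝ → ℝ)
    (hφ : ∀ t ∈ Icc (0 : ℝ) T, HasDerivAt φ (φ' t) t)
    (hφ' : ContinuousOn φ' (Icc 0 T)) :
    ∀ᵐ t ∂(volume.restrict (Ioo 0 T)),
      φ t * deriv (fun τ => ∫ s in (0 : ℝ)..τ, k (τ - s) * v s) t
        = deriv (fun τ => ∫ s in (0 : ℝ)..τ, k (τ - s) * (φ s * v s)) t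
          + ∫ σ in (0 : ℝ)..t, k' (t - σ) * (φ t - φ σ) * v σ :=
  statement5_general T k k' hk'int hkac v hv φ φ' hφ
end

section
/- Let q > 1 and set ϑ(q) = max{4, (6q−5)/2}. Then for all real numbers a,b > 0 and τ₁,τ₂ ≥ 0: (b−a)·(τ₁^{q+1}·a^{−q} − τ₂^{q+1}·b^{−q}) ≥ (1/(q−1))·τ₁τ₂·( (τ₂/b)^{(q−1)/2} − (τ₁/a)^{(q−1)/2} )² − ϑ(q)·(τ₁−τ₂)²·( (τ₂/b)^{q−1} + (τ₁/a)^{q−1} ). (Here (b/τ₂)^{(1−q)/2} has been rewritten as (τ₂/b)^{(q−1)/2}, and similarly for the other terms, so that all expressions are well defined also when τ₁ = 0 or τ₂ = 0.) -/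
/-!
Put `x = τ₁ / a`, `y = τ₂ / b`, `α = x ^ ((q - 1) / 2)`, `β = y ^ ((q - 1) / 2)`, so that
`τ₁ = a x` and `τ₂ = b y`. The right-hand side splits as
`a b (x - y) (x ^ q - y ^ q) - (τ₁ - τ₂) (τ₁ α² - τ₂ β²)`.
The first term is bounded below by `4 q x y (α - β)² / (q - 1)²`: writing `x = e^(m + θ)`,
`y = e^(m - θ)`, this is `(q + 1)² sinh² ((q - 1) θ / 2) ≤ (q - 1)² sinh² ((q + 1) θ / 2)`,
i.e. the monotonicity of `sinh t / t` on `t ≥ 0`. The cross term is then absorbed by a sum of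
squares, which needs only `1 ≤ ϑ` and `(q - 1)² ≤ (2 ϑ - 1) (3 q + 1)`.
-/

open Real

theorem Real.mul_sinh_le_sinh_mul {l w : ℝ} (hl : 1 ≤ l) (hw : 0 ≤ w) :
    l * sinh w ≤ sinh (l * w) := by
  let f : ℝ → ℝ := fun w ↦ sinh (l * w) - l * sinh w
  have hf : ∀ x, HasDerivAt f (l * (cosh (l * x) - cosh x)) x := fun x ↦
    (((hasDerivAt_id x).const_mul l).sinh.sub ((hasDerivAt_sinh x).const_mul l)).congr_deriv
      (by simp only [id, mul_one]; ring)
  have hmono : MonotoneOn f (Set.Ici 0) := by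
    refine monotoneOn_of_hasDerivWithinAt_nonneg (convex_Ici 0)
      (fun x _ ↦ (hf x).continuousAt.continuousWithinAt)
      (fun x _ ↦ (hf x).hasDerivWithinAt) fun x hx ↦ ?_
    rw [interior_Ici, Set.mem_Ioi] at hx
    have : cosh x ≤ cosh (l * x) := by
      rw [cosh_le_cosh, abs_of_pos hx, abs_of_pos (by positivity)]
      nlinarith
    nlinarith
  simpa [f] using hmono Set.self_mem_Ici hw hw

theorem Real.sq_mul_sinh_le_sq_mul_sinh {c d : ℝ} (hc : 0 ≤ c) (hcd : c ≤ d) (θ : ℝ) :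
    (d * sinh (c * θ)) ^ 2 ≤ (c * sinh (d * θ)) ^ 2 := by
  wlog hθ : 0 ≤ θ generalizing θ
  · simpa [mul_neg, sinh_neg, neg_sq] using this (-θ) (by linarith)
  rcases hc.eq_or_lt with rfl | hc
  · simp
  have key : d / c * sinh (c * θ) ≤ sinh (d * θ) := by
    have := mul_sinh_le_sinh_mul ((one_le_div hc).2 hcd) (mul_nonneg hc.le hθ)
    rwa [show d / c * (c * θ) = d * θ by field_simp] at this
  have h0 : 0 ≤ d * sinh (c * θ) :=
    mul_nonneg (hc.le.trans hcd) (sinh_nonneg_iff.2 (mul_nonneg hc.le hθ))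
  rw [div_mul_eq_mul_div, div_le_iff₀ hc, mul_comm _ c] at key
  exact pow_le_pow_left₀ h0 key 2

theorem Real.sinh_add_mul_sinh_sub (p r : ℝ) :
    sinh (p + r) * sinh (p - r) = sinh p ^ 2 - sinh r ^ 2 := by
  rw [sinh_add, sinh_sub]
  linear_combination sinh p ^ 2 * cosh_sq r - sinh r ^ 2 * cosh_sq p

theorem Real.exp_add_sub_exp_sub (a b : ℝ) : exp (a + b) - exp (a - b) = 2 * exp a * sinh b := by
  rw [sinh_eq, exp_add, exp_sub, exp_neg]
  field_simp

theorem Real.four_mul_sinh_sq_le {q : ℝ} (hq : 1 ≤ q) (θ : ℝ) :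
    4 * q * sinh (θ * ((q - 1) / 2)) ^ 2 ≤ (q - 1) ^ 2 * (sinh θ * sinh (θ * q)) := by
  have hmono := sq_mul_sinh_le_sq_mul_sinh (c := (q - 1) / 2) (d := (q + 1) / 2)
    (by linarith) (by linarith) θ
  have hprod : sinh θ * sinh (θ * q) = sinh ((q + 1) / 2 * θ) ^ 2 - sinh ((q - 1) / 2 * θ) ^ 2 := by
    rw [← sinh_add_mul_sinh_sub, mul_comm]
    ring_nf
  rw [hprod, mul_comm θ]
  nlinarith [hmono]

theorem Real.rpow_sub_one_eq_sq {x : ℝ} (hx : 0 ≤ x) (q : ℝ) :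
    x ^ (q - 1) = (x ^ ((q - 1) / 2)) ^ 2 := by
  rw [← rpow_natCast, ← rpow_mul hx]
  norm_num

theorem Real.rpow_eq_mul_sq {x q : ℝ} (hx : 0 ≤ x) (hq : q ≠ 0) :
    x ^ q = x * (x ^ ((q - 1) / 2)) ^ 2 := by
  rw [← rpow_sub_one_eq_sq hx, ← rpow_one_add' hx (by simpa using hq)]
  ring_nf

theorem Real.mul_rpow_add_one_mul_rpow_neg {a x q : ℝ} (ha : 0 < a) (hx : 0 ≤ x) (hq : q + 1 ≠ 0) :
    (a * x) ^ (q + 1) * a ^ (-q) = a * x * x ^ q := by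
  rw [rpow_add' (by positivity) hq, rpow_one, mul_rpow ha.le hx, rpow_neg ha.le]
  field_simp

theorem four_mul_mul_rpow_sub_sq_le {q x y : ℝ} (hq : 1 ≤ q) (hx : 0 ≤ x) (hy : 0 ≤ y) :
    4 * q * (x * y) * (x ^ ((q - 1) / 2) - y ^ ((q - 1) / 2)) ^ 2
      ≤ (q - 1) ^ 2 * ((x - y) * (x ^ q - y ^ q)) := by
  have hq0 : q ≠ 0 := by positivity
  rcases hx.eq_or_lt with rfl | hx
  · simp only [zero_mul, mul_zero, zero_sub, neg_mul_neg, zero_rpow hq0]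
    have := rpow_nonneg hy q
    positivity
  rcases hy.eq_or_lt with rfl | hy
  · simp only [zero_mul, mul_zero, sub_zero, zero_rpow hq0]
    have := rpow_nonneg hx.le q
    positivity
  obtain ⟨m, θ, rfl, rfl⟩ : ∃ m θ, x = exp (m + θ) ∧ y = exp (m - θ) :=
    ⟨(log x + log y) / 2, (log x - log y) / 2, by ring_nf; rw [exp_log hx], by
      ring_nf; rw [exp_log hy]⟩
  simp only [← exp_mul, add_mul, sub_mul, exp_add_sub_exp_sub]
  have hE : exp (m + θ) * exp (m - θ) * exp (m * ((q - 1) / 2)) ^ 2 = exp m * exp (m * q) := by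
    simp only [sq, ← exp_add]
    ring_nf
  calc 4 * q * (exp (m + θ) * exp (m - θ))
        * (2 * exp (m * ((q - 1) / 2)) * sinh (θ * ((q - 1) / 2))) ^ 2
      = 4 * (exp m * exp (m * q)) * (4 * q * sinh (θ * ((q - 1) / 2)) ^ 2) := by rw [← hE]; ring
    _ ≤ 4 * (exp m * exp (m * q)) * ((q - 1) ^ 2 * (sinh θ * sinh (θ * q))) :=
      mul_le_mul_of_nonneg_left (four_mul_sinh_sq_le hq θ) (by positivity)
    _ = (q - 1) ^ 2 * (2 * exp m * sinh θ * (2 * exp (m * q) * sinh (θ * q))) := by ring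

theorem sub_mul_sub_le {τ₁ τ₂ k ϑ : ℝ} (h₁ : 0 ≤ τ₁) (h₂ : 0 ≤ τ₂) (hϑ : 1 ≤ ϑ)
    (hk : 1 ≤ (2 * ϑ - 1) * k) (α β : ℝ) :
    (τ₁ - τ₂) * (τ₁ * α ^ 2 - τ₂ * β ^ 2)
      ≤ k * (τ₁ * τ₂) * (α - β) ^ 2 + ϑ * (τ₁ - τ₂) ^ 2 * (α ^ 2 + β ^ 2) := by
  set e := 2 * ϑ - 1
  have hsos : e * (k * (τ₁ * τ₂) * (α - β) ^ 2 + ϑ * (τ₁ - τ₂) ^ 2 * (α ^ 2 + β ^ 2)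
      - (τ₁ - τ₂) * (τ₁ * α ^ 2 - τ₂ * β ^ 2))
      = (e * k - 1) * (τ₁ * τ₂) * (α - β) ^ 2
        + ((τ₁ + τ₂) / 2 * (α - β) - e / 2 * (τ₁ - τ₂) * (α + β)) ^ 2
        + (e ^ 2 - 1) / 4 * ((τ₁ - τ₂) * (α - β)) ^ 2 := by
    ring
  have he : 1 ≤ e := by linarith
  have hD : 0 ≤ e * (k * (τ₁ * τ₂) * (α - β) ^ 2 + ϑ * (τ₁ - τ₂) ^ 2 * (α ^ 2 + β ^ 2)
      - (τ₁ - τ₂) * (τ₁ * α ^ 2 - τ₂ * β ^ 2)) := by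
    rw [hsos]
    have : 0 ≤ e ^ 2 - 1 := by nlinarith
    have : 0 ≤ e * k - 1 := by linarith
    positivity
  exact sub_nonneg.1 ((mul_nonneg_iff_of_pos_left (by linarith)).1 hD)

theorem le_sub_mul_sub_of_four_mul_le {q ϑ a b x y α β : ℝ} (hq : 1 < q) (ha : 0 ≤ a)
    (hb : 0 ≤ b) (hx : 0 ≤ x) (hy : 0 ≤ y) (hϑ : 1 ≤ ϑ)
    (hϑq : (q - 1) ^ 2 ≤ (2 * ϑ - 1) * (3 * q + 1))
    (hcore : 4 * q * (x * y) * (α - β) ^ 2 ≤ (q - 1) ^ 2 * ((x - y) * (x * α ^ 2 - y * β ^ 2))) :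
    1 / (q - 1) * (a * x * (b * y)) * (β - α) ^ 2 - ϑ * (a * x - b * y) ^ 2 * (β ^ 2 + α ^ 2)
      ≤ (b - a) * (a * x * (x * α ^ 2) - b * y * (y * β ^ 2)) := by
  have hq1 : 0 < q - 1 := by linarith
  have hk : 4 * q / (q - 1) ^ 2 - 1 / (q - 1) = (3 * q + 1) / (q - 1) ^ 2 := by
    field_simp
    ring
  have hcross := sub_mul_sub_le (k := 4 * q / (q - 1) ^ 2 - 1 / (q - 1)) (mul_nonneg ha hx)
    (mul_nonneg hb hy) hϑ (by rw [hk, mul_div_assoc', le_div_iff₀ (by positivity)]; linarith) α β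
  have hcore' : 4 * q / (q - 1) ^ 2 * (a * x * (b * y)) * (α - β) ^ 2
      ≤ a * b * ((x - y) * (x * α ^ 2 - y * β ^ 2)) :=
    calc 4 * q / (q - 1) ^ 2 * (a * x * (b * y)) * (α - β) ^ 2
        = a * b / (q - 1) ^ 2 * (4 * q * (x * y) * (α - β) ^ 2) := by ring
      _ ≤ a * b / (q - 1) ^ 2 * ((q - 1) ^ 2 * ((x - y) * (x * α ^ 2 - y * β ^ 2))) := by
        gcongr
      _ = a * b * ((x - y) * (x * α ^ 2 - y * β ^ 2)) := by field_simp
  linear_combination hcore' + hcross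

/-- The algebraic inequality of Lemma (fundamental identity 4, part 1):
for `q > 1`, `ϑ(q) = max{4,(6q-5)/2}`, all `a,b > 0` and `τ₁,τ₂ ≥ 0`:
`(b-a)(τ₁^{q+1} a^{-q} - τ₂^{q+1} b^{-q})
  ≥ (1/(q-1)) τ₁ τ₂ ((τ₂/b)^{(q-1)/2} - (τ₁/a)^{(q-1)/2})²
    - ϑ(q) (τ₁-τ₂)² ((τ₂/b)^{q-1} + (τ₁/a)^{q-1})`. -/
theorem statement6 (q : ℝ) (hq : 1 < q) (a b τ₁ τ₂ : ℝ)
    (ha : 0 < a) (hb : 0 < b) (hτ₁ : 0 ≤ τ₁) (hτ₂ : 0 ≤ τ₂) :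
    (1 / (q - 1)) * (τ₁ * τ₂) *
        ((τ₂ / b) ^ ((q - 1) / 2) - (τ₁ / a) ^ ((q - 1) / 2)) ^ 2
      - max 4 ((6 * q - 5) / 2) * (τ₁ - τ₂) ^ 2 *
        ((τ₂ / b) ^ (q - 1) + (τ₁ / a) ^ (q - 1))
      ≤ (b - a) * (τ₁ ^ (q + 1) * a ^ (-q) - τ₂ ^ (q + 1) * b ^ (-q)) := by
  obtain ⟨x, hx, rfl⟩ : ∃ x, 0 ≤ x ∧ τ₁ = a * x := ⟨τ₁ / a, by positivity, by field_simp⟩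
  obtain ⟨y, hy, rfl⟩ : ∃ y, 0 ≤ y ∧ τ₂ = b * y := ⟨τ₂ / b, by positivity, by field_simp⟩
  have hq0 : q ≠ 0 := by positivity
  have hcore := four_mul_mul_rpow_sub_sq_le hq.le hx hy
  rw [rpow_eq_mul_sq hx hq0, rpow_eq_mul_sq hy hq0] at hcore
  rw [mul_div_cancel_left₀ x ha.ne', mul_div_cancel_left₀ y hb.ne',
    mul_rpow_add_one_mul_rpow_neg ha hx (by positivity),
    mul_rpow_add_one_mul_rpow_neg hb hy (by positivity), rpow_sub_one_eq_sq hx,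
    rpow_sub_one_eq_sq hy, rpow_eq_mul_sq hx hq0, rpow_eq_mul_sq hy hq0]
  refine le_sub_mul_sub_of_four_mul_le hq ha.le hb.le hx hy ?_ ?_ hcore
  · exact le_trans (by norm_num) (le_max_left _ _)
  · nlinarith [le_max_right 4 ((6 * q - 5) / 2)]
end

section
/- Let q ∈ (0,1) and set ζ(q) = 4q/(1−q), ζ₁(q) = ζ(q)/6, and ζ₂(q) = ζ(q) + 9/q. Then for all real numbers a,b > 0 and τ₁,τ₂ ≥ 0: (b−a)·(τ₁²·a^{−q} − τ₂²·b^{−q}) ≥ ζ₁(q)·( τ₂·b^{(1−q)/2} − τ₁·a^{(1−q)/2} )² − ζ₂(q)·(τ₂−τ₁)²·( b^{1−q} + a^{1−q} ). -/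
/-!
Write `a = m e^{-t}`, `b = m e^{t}`. Rescaling `τᵢ` by `m^{(1-q)/2}` removes `m`, and the claim
becomes the nonnegativity of a quadratic form `A τ₁² + 2 B τ₁ τ₂ + C τ₂²` whose coefficients
depend on `t` only. Here `A > 0` because `1 + ζ₁ ≤ ζ₂`, and
`AC - B² = 4 (2ζ₂ sinh(qt) sinh t cosh((1-q)t) - (1+ζ₁) sinh² t - ζ₁ζ₂ cosh((1-q)t) (cosh((1-q)t) - 1))`.
This is nonnegative by the convexity of `sinh` on `[0, ∞)`: it gives
`min(q, 1/2) sinh t ≤ sinh(qt) cosh((1-q)t)`, which controls the middle term, and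
`cosh x - 1 ≤ (x/2) sinh x`, which controls the last one.
-/
open Real

namespace Real

theorem convexOn_sinh : ConvexOn ℝ (Set.Ici 0) sinh := by
  refine MonotoneOn.convexOn_of_deriv (convex_Ici 0) continuous_sinh.continuousOn
    differentiable_sinh.differentiableOn ?_
  rw [deriv_sinh, interior_Ici]
  intro x hx y hy hxy
  exact cosh_le_cosh.2 (by rwa [abs_of_pos hx, abs_of_pos hy])

theorem sinh_le_mul_cosh {x : ℝ} (hx : 0 ≤ x) : sinh x ≤ x * cosh x := by
  rcases hx.eq_or_lt with rfl | hx
  · simp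
  have := convexOn_sinh.slope_le_deriv Set.self_mem_Ici hx.le hx differentiableAt_sinh
  rw [slope_def_field, deriv_sinh, sinh_zero, sub_zero, sub_zero, div_le_iff₀ hx] at this
  linarith

theorem sinh_mul_le_mul_sinh {c x : ℝ} (hc₀ : 0 ≤ c) (hc₁ : c ≤ 1) (hx : 0 ≤ x) :
    sinh (c * x) ≤ c * sinh x := by
  simpa using convexOn_sinh.2 Set.self_mem_Ici hx (sub_nonneg.2 hc₁) hc₀ (by ring)

theorem cosh_sub_one_le_mul_sinh {x : ℝ} (hx : 0 ≤ x) : cosh x - 1 ≤ x / 2 * sinh x := by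
  have half := sinh_le_mul_cosh (x := x / 2) (by positivity)
  have hs : 0 ≤ sinh (x / 2) := sinh_nonneg_iff.2 (by positivity)
  rw [show x = 2 * (x / 2) by ring, cosh_two_mul, sinh_two_mul, cosh_sq]
  nlinarith

theorem two_mul_sinh_mul_cosh (x y : ℝ) :
    2 * sinh x * cosh y = sinh (x + y) + sinh (x - y) := by
  rw [sinh_add, sinh_sub]; ring

end Real

theorem quadratic_form_nonneg {K : Type*} [Field K] [LinearOrder K] [IsStrictOrderedRing K]
    {A B C : K} (hA : 0 < A) (hdisc : B ^ 2 ≤ A * C) (x y : K) :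
    0 ≤ A * x ^ 2 + 2 * B * x * y + C * y ^ 2 := by
  refine nonneg_of_mul_nonneg_right ?_ hA
  nlinarith [sq_nonneg (A * x + B * y), mul_nonneg (sub_nonneg.2 hdisc) (sq_nonneg y)]

noncomputable def ζ (q : ℝ) : ℝ := 4 * q / (1 - q)

noncomputable def ζ₁ (q : ℝ) : ℝ := ζ q / 6

noncomputable def ζ₂ (q : ℝ) : ℝ := ζ q + 9 / q

section Constants

variable {q : ℝ}

theorem ζ_mul_one_sub (hq₁ : q < 1) : ζ q * (1 - q) = 4 * q := by
  unfold ζ; field_simp [(sub_pos.2 hq₁).ne']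

theorem ζ_nonneg (hq₀ : 0 < q) (hq₁ : q < 1) : 0 ≤ ζ q := by
  unfold ζ; exact div_nonneg (by linarith) (by linarith)

theorem ζ₂_nonneg (hq₀ : 0 < q) (hq₁ : q < 1) : 0 ≤ ζ₂ q := by
  have := ζ_nonneg hq₀ hq₁
  unfold ζ₂; positivity

theorem one_add_ζ₁_le_min_mul_ζ₂ (hq₀ : 0 < q) (hq₁ : q < 1) :
    1 + ζ₁ q ≤ min q (1 / 2) * ζ₂ q := by
  have hζ := ζ_mul_one_sub hq₁
  have h9 : 9 / q * q = 9 := by field_simp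
  unfold ζ₁ ζ₂
  rcases le_total q (1 / 2) with h | h
  · rw [min_eq_left h]; nlinarith [ζ_nonneg hq₀ hq₁]
  · rw [min_eq_right h]
    have : 9 ≤ 9 / q := by rw [le_div_iff₀ hq₀]; linarith
    nlinarith [ζ_nonneg hq₀ hq₁]

theorem one_add_ζ₁_le_ζ₂ (hq₀ : 0 < q) (hq₁ : q < 1) : 1 + ζ₁ q ≤ ζ₂ q := by
  have := one_add_ζ₁_le_min_mul_ζ₂ hq₀ hq₁
  have := ζ₂_nonneg hq₀ hq₁
  have : min q (1 / 2) ≤ 1 := (min_le_right _ _).trans (by norm_num)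
  nlinarith

end Constants

noncomputable def hyperbolicDiscriminant (q t : ℝ) : ℝ :=
  2 * ζ₂ q * sinh (q * t) * sinh t * cosh ((1 - q) * t) - (1 + ζ₁ q) * sinh t ^ 2
    - ζ₁ q * ζ₂ q * cosh ((1 - q) * t) * (cosh ((1 - q) * t) - 1)

theorem hyperbolicDiscriminant_neg (q t : ℝ) :
    hyperbolicDiscriminant q (-t) = hyperbolicDiscriminant q t := by
  simp only [hyperbolicDiscriminant, mul_neg, sinh_neg, cosh_neg, neg_sq, neg_mul, neg_neg]

section Hyperbolic

variable {q t : ℝ}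

theorem min_mul_sinh_le_sinh_mul_cosh (hq₀ : 0 ≤ q) (ht : 0 ≤ t) :
    min q (1 / 2) * sinh t ≤ sinh (q * t) * cosh ((1 - q) * t) := by
  have h := two_mul_sinh_mul_cosh (q * t) ((1 - q) * t)
  rw [show q * t + (1 - q) * t = t by ring] at h
  rcases le_total q (1 / 2) with hq | hq
  · have := sinh_mul_le_mul_sinh (c := 1 - 2 * q) (by linarith) (by linarith) ht
    rw [show q * t - (1 - q) * t = -((1 - 2 * q) * t) by ring, sinh_neg] at h
    rw [min_eq_left hq]; linarith
  · have : 0 ≤ sinh (q * t - (1 - q) * t) := sinh_nonneg_iff.2 (by nlinarith)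
    rw [min_eq_right hq]; linarith

theorem ζ_mul_cosh_sub_one_le (hq₀ : 0 < q) (hq₁ : q < 1) (ht : 0 ≤ t) :
    ζ q * (cosh ((1 - q) * t) - 1) ≤ 2 * sinh (q * t) * sinh t := by
  have hpt : 0 ≤ (1 - q) * t := mul_nonneg (by linarith) ht
  have hqt : 0 ≤ q * t := mul_nonneg hq₀.le ht
  have hcosh := cosh_sub_one_le_mul_sinh hpt
  have hsinh : sinh ((1 - q) * t) ≤ sinh t := sinh_le_sinh.2 (by nlinarith)
  have hself : q * t ≤ sinh (q * t) := self_le_sinh_iff.2 hqt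
  calc ζ q * (cosh ((1 - q) * t) - 1)
      ≤ ζ q * ((1 - q) * t / 2 * sinh ((1 - q) * t)) :=
        mul_le_mul_of_nonneg_left hcosh (ζ_nonneg hq₀ hq₁)
    _ = 2 * (q * t) * sinh ((1 - q) * t) := by
        linear_combination t / 2 * sinh ((1 - q) * t) * ζ_mul_one_sub hq₁
    _ ≤ 2 * sinh (q * t) * sinh t := by gcongr

theorem hyperbolicDiscriminant_nonneg_of_nonneg (hq₀ : 0 < q) (hq₁ : q < 1) (ht : 0 ≤ t) :
    0 ≤ hyperbolicDiscriminant q t := by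
  have hsc := min_mul_sinh_le_sinh_mul_cosh hq₀.le ht
  have hconst := one_add_ζ₁_le_min_mul_ζ₂ hq₀ hq₁
  have hcosh := ζ_mul_cosh_sub_one_le hq₀ hq₁ ht
  have hS : 0 ≤ sinh t := sinh_nonneg_iff.2 ht
  have hs : 0 ≤ sinh (q * t) := sinh_nonneg_iff.2 (mul_nonneg hq₀.le ht)
  have hc : 0 ≤ cosh ((1 - q) * t) := (cosh_pos _).le
  have hζ₂ := ζ₂_nonneg hq₀ hq₁
  have middle : (1 + ζ₁ q) * sinh t ^ 2
      ≤ ζ₂ q * (sinh (q * t) * cosh ((1 - q) * t)) * sinh t :=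
    calc (1 + ζ₁ q) * sinh t ^ 2 ≤ ζ₂ q * (min q (1 / 2) * sinh t) * sinh t := by
          nlinarith [mul_le_mul_of_nonneg_right hconst (sq_nonneg (sinh t))]
      _ ≤ _ := by gcongr
  have last : ζ₁ q * ζ₂ q * cosh ((1 - q) * t) * (cosh ((1 - q) * t) - 1)
      ≤ ζ₂ q * cosh ((1 - q) * t) * (2 * sinh (q * t) * sinh t) / 6 := by
    unfold ζ₁
    nlinarith [mul_le_mul_of_nonneg_left hcosh (mul_nonneg hζ₂ hc)]
  unfold hyperbolicDiscriminant
  nlinarith [mul_nonneg (mul_nonneg hζ₂ hs) (mul_nonneg hS hc)]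

theorem hyperbolicDiscriminant_nonneg (hq₀ : 0 < q) (hq₁ : q < 1) (t : ℝ) :
    0 ≤ hyperbolicDiscriminant q t := by
  rcases le_total 0 t with ht | ht
  · exact hyperbolicDiscriminant_nonneg_of_nonneg hq₀ hq₁ ht
  · rw [← hyperbolicDiscriminant_neg]
    exact hyperbolicDiscriminant_nonneg_of_nonneg hq₀ hq₁ (neg_nonneg.2 ht)

theorem inequality_at_exp_neg_exp (hq₀ : 0 < q) (hq₁ : q < 1) (τ₁ τ₂ : ℝ) :
    ζ₁ q * (τ₂ * exp t ^ ((1 - q) / 2) - τ₁ * exp (-t) ^ ((1 - q) / 2)) ^ 2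
      - ζ₂ q * (τ₂ - τ₁) ^ 2 * (exp t ^ (1 - q) + exp (-t) ^ (1 - q))
      ≤ (exp t - exp (-t)) * (τ₁ ^ 2 * exp (-t) ^ (-q) - τ₂ ^ 2 * exp t ^ (-q)) := by
  set w := exp ((1 - q) * t / 2)
  set v := exp (q * t / 2)
  have hw : 0 < w := exp_pos _
  have hv : 0 < v := exp_pos _
  have e₁ : exp t ^ ((1 - q) / 2) = w := by rw [← exp_mul]; congr 1; ring
  have e₂ : exp (-t) ^ ((1 - q) / 2) = w⁻¹ := by rw [← exp_mul, ← exp_neg]; congr 1; ring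
  have e₃ : exp t ^ (1 - q) = w ^ 2 := by rw [← exp_mul, sq, ← exp_add]; congr 1; ring
  have e₄ : exp (-t) ^ (1 - q) = (w ^ 2)⁻¹ := by
    rw [← exp_mul, sq, ← exp_add, ← exp_neg]; congr 1; ring
  have e₅ : exp (-t) ^ (-q) = v ^ 2 := by rw [← exp_mul, sq, ← exp_add]; congr 1; ring
  have e₆ : exp t ^ (-q) = (v ^ 2)⁻¹ := by
    rw [← exp_mul, sq, ← exp_add, ← exp_neg]; congr 1; ring
  have e₇ : exp t = w ^ 2 * v ^ 2 := by
    rw [sq, sq, ← exp_add, ← exp_add, ← exp_add]; congr 1; ring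
  have e₈ : exp (-t) = (w ^ 2 * v ^ 2)⁻¹ := by rw [exp_neg, e₇]
  have e₉ : exp (q * t) = v ^ 2 := by rw [sq, ← exp_add]; congr 1; ring
  have e₁₀ : exp ((1 - q) * t) = w ^ 2 := by rw [sq, ← exp_add]; congr 1; ring
  have hW := hyperbolicDiscriminant_nonneg hq₀ hq₁ t
  rw [hyperbolicDiscriminant, sinh_eq, sinh_eq, cosh_eq, exp_neg, exp_neg, exp_neg, e₇, e₉,
    e₁₀] at hW
  set A := (w ^ 2 * v ^ 2 - (w ^ 2 * v ^ 2)⁻¹) * v ^ 2 - ζ₁ q * (w ^ 2)⁻¹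
    + ζ₂ q * (w ^ 2 + (w ^ 2)⁻¹)
  set B := ζ₁ q - ζ₂ q * (w ^ 2 + (w ^ 2)⁻¹)
  set C := -(w ^ 2 * v ^ 2 - (w ^ 2 * v ^ 2)⁻¹) * (v ^ 2)⁻¹ - ζ₁ q * w ^ 2
    + ζ₂ q * (w ^ 2 + (w ^ 2)⁻¹)
  have hA : 0 < A := by
    have hA' : A = w ^ 2 * v ^ 4 + ζ₂ q * w ^ 2 + (ζ₂ q - 1 - ζ₁ q) * (w ^ 2)⁻¹ := by
      simp only [A]; field_simp; ring
    have hconst := one_add_ζ₁_le_ζ₂ hq₀ hq₁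
    have hlast : 0 ≤ (ζ₂ q - 1 - ζ₁ q) * (w ^ 2)⁻¹ := mul_nonneg (by linarith) (by positivity)
    have hζ₂ := ζ₂_nonneg hq₀ hq₁
    rw [hA']
    positivity
  have hdisc : B ^ 2 ≤ A * C := by
    rw [← sub_nonneg]
    calc 0 ≤ 4 * _ := mul_nonneg zero_le_four hW
      _ = A * C - B ^ 2 := by simp only [A, B, C]; field_simp; ring
  rw [e₁, e₂, e₃, e₄, e₅, e₆, e₇, e₈, ← sub_nonneg]
  calc 0 ≤ A * τ₁ ^ 2 + 2 * B * τ₁ * τ₂ + C * τ₂ ^ 2 := quadratic_form_nonneg hA hdisc τ₁ τ₂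
    _ = _ := by simp only [A, B, C]; field_simp; ring

end Hyperbolic

theorem exists_eq_mul_exp_neg_and_eq_mul_exp {a b : ℝ} (ha : 0 < a) (hb : 0 < b) :
    ∃ m t, 0 < m ∧ a = m * exp (-t) ∧ b = m * exp t := by
  refine ⟨exp ((log a + log b) / 2), (log b - log a) / 2, exp_pos _, ?_, ?_⟩
  · nth_rewrite 1 [← exp_log ha]; rw [← exp_add]; congr 1; ring
  · nth_rewrite 1 [← exp_log hb]; rw [← exp_add]; congr 1; ring

theorem statement7_general (q : ℝ) (hq : q ∈ Set.Ioo (0 : ℝ) 1) (a b τ₁ τ₂ : ℝ)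
    (ha : 0 < a) (hb : 0 < b) :
    ((4 * q / (1 - q)) / 6) * (τ₂ * b ^ ((1 - q) / 2) - τ₁ * a ^ ((1 - q) / 2)) ^ 2
      - (4 * q / (1 - q) + 9 / q) * (τ₂ - τ₁) ^ 2 * (b ^ (1 - q) + a ^ (1 - q))
      ≤ (b - a) * (τ₁ ^ 2 * a ^ (-q) - τ₂ ^ 2 * b ^ (-q)) := by
  obtain ⟨hq₀, hq₁⟩ := hq
  show ζ₁ q * _ - ζ₂ q * _ * _ ≤ _
  obtain ⟨m, t, hm, rfl, rfl⟩ := exists_eq_mul_exp_neg_and_eq_mul_exp ha hb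
  have hP : m ^ (1 - q) = (m ^ ((1 - q) / 2)) ^ 2 := by
    rw [← rpow_natCast, ← rpow_mul hm.le]; norm_num
  have hN : m ^ (-q) = (m ^ ((1 - q) / 2)) ^ 2 / m := by
    rw [← hP, eq_div_iff hm.ne', ← rpow_add_one hm.ne']; ring_nf
  simp only [mul_rpow hm.le (exp_pos _).le, hP, hN]
  convert inequality_at_exp_neg_exp hq₀ hq₁ (m ^ ((1 - q) / 2) * τ₁) (m ^ ((1 - q) / 2) * τ₂)
    using 1
  · ring
  · field_simp

/-- The algebraic inequality of Lemma (fundamental identity 4, part 2):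
for `q ∈ (0,1)`, `ζ(q) = 4q/(1-q)`, `ζ₁(q) = ζ(q)/6`, `ζ₂(q) = ζ(q) + 9/q`,
all `a,b > 0` and `τ₁,τ₂ ≥ 0`:
`(b-a)(τ₁² a^{-q} - τ₂² b^{-q})
  ≥ ζ₁(q)(τ₂ b^{(1-q)/2} - τ₁ a^{(1-q)/2})² - ζ₂(q)(τ₂-τ₁)²(b^{1-q} + a^{1-q})`. -/
theorem statement7 (q : ℝ) (hq : q ∈ Set.Ioo (0 : ℝ) 1) (a b τ₁ τ₂ : ℝ)
    (ha : 0 < a) (hb : 0 < b) (hτ₁ : 0 ≤ τ₁) (hτ₂ : 0 ≤ τ₂) :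
    ((4 * q / (1 - q)) / 6) * (τ₂ * b ^ ((1 - q) / 2) - τ₁ * a ^ ((1 - q) / 2)) ^ 2
      - (4 * q / (1 - q) + 9 / q) * (τ₂ - τ₁) ^ 2 * (b ^ (1 - q) + a ^ (1 - q))
      ≤ (b - a) * (τ₁ ^ 2 * a ^ (-q) - τ₂ ^ 2 * b ^ (-q)) :=
  statement7_general q hq a b τ₁ τ₂ ha hb
end

section
/- Let (X,μ) be a measure space and let (U_σ)_{σ∈(0,1]} be a family of measurable subsets of X with U_{σ'} ⊆ U_σ whenever σ' ≤ σ. Let κ > 1, p̄ ≥ 1, C ≥ 1 and γ > 0. Suppose f is a μ-measurable function on U₁ such that ‖f‖_{L^{βκ}(U_{σ'})} ≤ ( C·(1+β)^{γ}/(σ−σ')^{γ} )^{1/β}·‖f‖_{L^{β}(U_σ)} for all 0 < σ' < σ ≤ 1 and all β > 0. Then there exist constants M = M(C,γ,κ,p̄) and γ₀ = γ₀(γ,κ) such that for all δ ∈ (0,1) and all p ∈ (0,p̄]: esssup_{U_δ} |f| ≤ ( M/(1−δ)^{γ₀} )^{1/p}·‖f‖_{L^{p}(U₁)}. -/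
/-!
Moser iteration: apply the hypothesis along the exponents `p κ^n` and the radii
`σ_n = δ + (1 - δ) / 2^n`, which decrease from `1` to `δ`. After `N` steps the
`L^{p κ^N}(U_δ)` norm is at most the `L^p(U_1)` norm times
`∏_{n<N} (C (1 + p κ^n)^γ 2^{γ(n+1)} / (1 - δ)^γ)^{1/(p κ^n)}`. With `A = C ((1 + p₀) 2κ)^γ`
the `n`-th factor is at most `(A^{n+1} / (1 - δ)^γ)^{κ^{-n}/p}`, so the product is bounded
uniformly in `N` by `(A^{S₂} / (1 - δ)^{γ S₁})^{1/p}`, where `S₁ = ∑ κ^{-n} = (1 - κ⁻¹)⁻¹` and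
`S₂ = ∑ (n + 1) κ^{-n} = (1 - κ⁻¹)⁻²`. A Chebyshev bound on the level sets turns bounds on
`L^q` norms with `q → ∞` into a bound on the essential supremum.
-/

open MeasureTheory Set ENNReal

/-- The (quasi-)norm `‖f‖_{L^β(U)} = (∫_U |f|^β dμ)^{1/β}`, valued in `ℝ≥0∞`,
for any exponent `β > 0`. -/
noncomputable def plnorm {X : Type*} [MeasurableSpace X] (μ : Measure X) (U : Set X)
    (f : X → ℝ) (β : ℝ) : ℝ≥0∞ :=
  (∫⁻ x in U, ENNReal.ofReal |f x| ^ β ∂μ) ^ (1 / β)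

open Filter Topology

theorem meas_le_le_div_rpow_of_lintegral_rpow_le {X : Type*} [MeasurableSpace X] {μ : Measure X}
    {g : X → ℝ≥0∞} (hg : AEMeasurable g μ) {q : ℝ} (hq : 0 < q) {B c : ℝ≥0∞} (hBc : B < c)
    (hB : (∫⁻ x, g x ^ q ∂μ) ^ (1 / q) ≤ B) :
    μ {x | c ≤ g x} ≤ (B / c) ^ q := by
  rw [ENNReal.div_rpow_of_nonneg _ _ hq.le, ENNReal.le_div_iff_mul_le
    (Or.inl (ENNReal.rpow_pos_of_nonneg (pos_of_gt hBc) hq.le).ne')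
    (Or.inr (ENNReal.rpow_lt_top_of_nonneg hq.le hBc.ne_top).ne), mul_comm]
  calc c ^ q * μ {x | c ≤ g x} ≤ c ^ q * μ {x | c ^ q ≤ g x ^ q} :=
        mul_le_mul_right (measure_mono fun x (hx : c ≤ g x) => ENNReal.rpow_le_rpow hx hq.le) _
    _ ≤ ∫⁻ x, g x ^ q ∂μ := mul_meas_ge_le_lintegral₀ (hg.pow_const q) _
    _ ≤ B ^ q := (ENNReal.rpow_inv_le_iff hq).mp (one_div q ▸ hB)

theorem essSup_le_of_lintegral_rpow_le {X : Type*} [MeasurableSpace X] {μ : Measure X}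
    {g : X → ℝ≥0∞} (hg : AEMeasurable g μ) {q : ℕ → ℝ} (hq : ∀ n, 0 < q n)
    (hq_top : Tendsto q atTop atTop) {B : ℝ≥0∞}
    (hB : ∀ n, (∫⁻ x, g x ^ q n ∂μ) ^ (1 / q n) ≤ B) :
    essSup g μ ≤ B := by
  refine le_of_forall_gt_imp_ge_of_dense fun c hBc => essSup_le_of_ae_le c ?_
  have hlevel : μ {x | c ≤ g x} = 0 := by
    have hlim : Tendsto (fun n => (B / c) ^ q n) atTop (𝓝 0) :=
      (ENNReal.tendsto_rpow_atTop_of_base_lt_one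
        ((ENNReal.div_lt_iff (Or.inl (pos_of_gt hBc).ne') (Or.inr hBc.ne_top)).mpr
          (by rwa [one_mul]))).comp hq_top
    exact le_antisymm (ge_of_tendsto' hlim fun n =>
      meas_le_le_div_rpow_of_lintegral_rpow_le hg (hq n) hBc (hB n)) bot_le
  filter_upwards [measure_eq_zero_iff_ae_notMem.mp hlevel] with x hx
  exact (not_le.mp hx).le

theorem sum_range_pow_le_inv_one_sub {x : ℝ} (hx0 : 0 ≤ x) (hx1 : x < 1) (N : ℕ) :
    ∑ n ∈ Finset.range N, x ^ n ≤ (1 - x)⁻¹ :=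
  sum_le_hasSum _ (fun n _ => by positivity) (hasSum_geometric_of_lt_one hx0 hx1)

theorem sum_range_succ_mul_pow_le {x : ℝ} (hx0 : 0 ≤ x) (hx1 : x < 1) (N : ℕ) :
    ∑ n ∈ Finset.range N, ((n : ℝ) + 1) * x ^ n ≤ (1 - x)⁻¹ ^ 2 := by
  have hsum : HasSum (fun n : ℕ => ((n : ℝ) + 1) * x ^ n) ((1 - x)⁻¹ ^ 2) := by
    have hx1' : 1 - x ≠ 0 := by linarith
    have h := (hasSum_coe_mul_geometric_of_norm_lt_one (by rwa [Real.norm_of_nonneg hx0])).add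
      (hasSum_geometric_of_lt_one hx0 hx1)
    have hval : x / (1 - x) ^ 2 + (1 - x)⁻¹ = (1 - x)⁻¹ ^ 2 := by field_simp; ring
    simpa only [add_one_mul, hval] using h
  exact sum_le_hasSum _ (fun n _ => by positivity) hsum

theorem prod_rpow_geometric_le {A E x : ℝ} (hA : 1 ≤ A) (hE : 1 ≤ E) (hx0 : 0 ≤ x) (hx1 : x < 1)
    (N : ℕ) :
    ∏ n ∈ Finset.range N, (A ^ (n + 1) * E) ^ x ^ n ≤ A ^ ((1 - x)⁻¹ ^ 2) * E ^ (1 - x)⁻¹ := by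
  have hA0 : 0 < A := by linarith
  have hE0 : 0 < E := by linarith
  calc ∏ n ∈ Finset.range N, (A ^ (n + 1) * E) ^ x ^ n
      = A ^ (∑ n ∈ Finset.range N, ((n : ℝ) + 1) * x ^ n)
          * E ^ (∑ n ∈ Finset.range N, x ^ n) := by
        rw [Real.rpow_sum_of_pos hA0, Real.rpow_sum_of_pos hE0, ← Finset.prod_mul_distrib]
        refine Finset.prod_congr rfl fun n _ => ?_
        rw [Real.mul_rpow (by positivity) hE0.le, ← Real.rpow_natCast_mul hA0.le]
        push_cast; rfl
    _ ≤ A ^ ((1 - x)⁻¹ ^ 2) * E ^ (1 - x)⁻¹ := by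
        gcongr
        · exact sum_range_succ_mul_pow_le hx0 hx1 N
        · exact sum_range_pow_le_inv_one_sub hx0 hx1 N

theorem moser_factor_le {κ p₀ C γ r p : ℝ} (hκ : 1 ≤ κ) (hC : 1 ≤ C) (hγ : 0 ≤ γ) (hr : 0 < r)
    (hp : 0 ≤ p) (hpp₀ : p ≤ p₀) (n : ℕ) :
    C * (1 + p * κ ^ n) ^ γ / (r / 2 ^ (n + 1)) ^ γ
      ≤ (C * ((1 + p₀) * (2 * κ)) ^ γ) ^ (n + 1) * (r ^ γ)⁻¹ := by
  have hp₀ : 0 ≤ p₀ := hp.trans hpp₀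
  have hbase : (1 + p * κ ^ n) * 2 ^ (n + 1) ≤ ((1 + p₀) * (2 * κ)) ^ (n + 1) := by
    have hκn : 1 ≤ κ ^ n := one_le_pow₀ hκ
    have h1 : 1 + p * κ ^ n ≤ (1 + p₀) * κ ^ n := by
      nlinarith [mul_le_mul_of_nonneg_right hpp₀ (by positivity : (0 : ℝ) ≤ κ ^ n)]
    calc (1 + p * κ ^ n) * 2 ^ (n + 1) ≤ (1 + p₀) * κ ^ n * 2 ^ (n + 1) := by gcongr
      _ ≤ (1 + p₀) ^ (n + 1) * κ ^ (n + 1) * 2 ^ (n + 1) := by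
        have h2 : 1 + p₀ ≤ (1 + p₀) ^ (n + 1) := le_self_pow₀ (by linarith) n.succ_ne_zero
        have h3 : κ ^ n ≤ κ ^ (n + 1) := pow_le_pow_right₀ hκ n.le_succ
        gcongr
      _ = ((1 + p₀) * (2 * κ)) ^ (n + 1) := by rw [mul_pow, mul_pow]; ring
  calc C * (1 + p * κ ^ n) ^ γ / (r / 2 ^ (n + 1)) ^ γ
      = C * ((1 + p * κ ^ n) * 2 ^ (n + 1)) ^ γ * (r ^ γ)⁻¹ := by
        rw [Real.div_rpow hr.le (by positivity), Real.mul_rpow (by positivity) (by positivity)]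
        field_simp
    _ ≤ C ^ (n + 1) * (((1 + p₀) * (2 * κ)) ^ (n + 1)) ^ γ * (r ^ γ)⁻¹ := by
        gcongr
        exact le_self_pow₀ hC (by omega)
    _ = (C * ((1 + p₀) * (2 * κ)) ^ γ) ^ (n + 1) * (r ^ γ)⁻¹ := by
        rw [mul_pow C, Real.rpow_pow_comm (by positivity)]

theorem prod_moser_factor_le {κ p₀ C γ r p : ℝ} (hκ : 1 < κ) (hC : 1 ≤ C) (hγ : 0 ≤ γ)
    (hr : 0 < r) (hr1 : r ≤ 1) (hp : 0 < p) (hpp₀ : p ≤ p₀) (N : ℕ) :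
    ∏ n ∈ Finset.range N,
        ENNReal.ofReal (C * (1 + p * κ ^ n) ^ γ / (r / 2 ^ (n + 1)) ^ γ) ^ (1 / (p * κ ^ n))
      ≤ ENNReal.ofReal ((C * ((1 + p₀) * (2 * κ)) ^ γ) ^ ((1 - κ⁻¹)⁻¹ ^ 2)
          / r ^ (γ * (1 - κ⁻¹)⁻¹)) ^ (1 / p) := by
  set A := C * ((1 + p₀) * (2 * κ)) ^ γ
  set E := (r ^ γ)⁻¹
  have hA : 1 ≤ A :=
    one_le_mul_of_one_le_of_one_le hC (Real.one_le_rpow (by nlinarith) hγ)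
  have hE : 1 ≤ E := one_le_inv₀ (by positivity) |>.mpr (Real.rpow_le_one hr.le hr1 hγ)
  have hx0 : 0 ≤ κ⁻¹ := by positivity
  have hx1 : κ⁻¹ < 1 := inv_lt_one_of_one_lt₀ hκ
  have hfactor : ∀ n : ℕ,
      ENNReal.ofReal (C * (1 + p * κ ^ n) ^ γ / (r / 2 ^ (n + 1)) ^ γ) ^ (1 / (p * κ ^ n))
        ≤ ENNReal.ofReal ((A ^ (n + 1) * E) ^ κ⁻¹ ^ n) ^ (1 / p) := by
    intro n
    have hexp : 1 / (p * κ ^ n) = κ⁻¹ ^ n * (1 / p) := by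
      rw [inv_pow]; field_simp
    calc ENNReal.ofReal (C * (1 + p * κ ^ n) ^ γ / (r / 2 ^ (n + 1)) ^ γ) ^ (1 / (p * κ ^ n))
        ≤ ENNReal.ofReal (A ^ (n + 1) * E) ^ (1 / (p * κ ^ n)) := by
          gcongr
          exact moser_factor_le hκ.le hC hγ hr hp.le hpp₀ n
      _ = ENNReal.ofReal ((A ^ (n + 1) * E) ^ κ⁻¹ ^ n) ^ (1 / p) := by
          rw [hexp, ENNReal.rpow_mul, ENNReal.ofReal_rpow_of_nonneg (by positivity) (by positivity)]
  calc _ ≤ ∏ n ∈ Finset.range N, ENNReal.ofReal ((A ^ (n + 1) * E) ^ κ⁻¹ ^ n) ^ (1 / p) :=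
        Finset.prod_le_prod' fun n _ => hfactor n
    _ = ENNReal.ofReal (∏ n ∈ Finset.range N, (A ^ (n + 1) * E) ^ κ⁻¹ ^ n) ^ (1 / p) := by
        rw [ENNReal.prod_rpow_of_nonneg (by positivity),
          ENNReal.ofReal_prod_of_nonneg fun n _ => by positivity]
    _ ≤ ENNReal.ofReal (A ^ ((1 - κ⁻¹)⁻¹ ^ 2) * E ^ (1 - κ⁻¹)⁻¹) ^ (1 / p) := by
        gcongr
        exact prod_rpow_geometric_le hA hE hx0 hx1 N
    _ = _ := by
        rw [Real.inv_rpow (by positivity), ← Real.rpow_mul hr.le, ← div_eq_mul_inv]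

theorem plnorm_mono_set {X : Type*} [MeasurableSpace X] (μ : Measure X) {s t : Set X}
    (hst : s ⊆ t) (f : X → ℝ) {β : ℝ} (hβ : 0 ≤ β) : plnorm μ s f β ≤ plnorm μ t f β :=
  ENNReal.rpow_le_rpow (lintegral_mono_set hst) (one_div_nonneg.mpr hβ)

theorem plnorm_iterate_le {X : Type*} [MeasurableSpace X] {μ : Measure X} {U : ℝ → Set X}
    {f : X → ℝ} {κ C γ : ℝ} (hκ : 0 < κ)
    (hiter : ∀ σ' σ β : ℝ, 0 < σ' → σ' < σ → σ ≤ 1 → 0 < β →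
      plnorm μ (U σ') f (β * κ)
        ≤ ENNReal.ofReal (C * (1 + β) ^ γ / (σ - σ') ^ γ) ^ (1 / β) * plnorm μ (U σ) f β)
    {σ : ℕ → ℝ} (hσ : StrictAnti σ) (hσpos : ∀ n, 0 < σ n) (hσ0 : σ 0 ≤ 1)
    {p : ℝ} (hp : 0 < p) (N : ℕ) :
    plnorm μ (U (σ N)) f (p * κ ^ N)
      ≤ (∏ n ∈ Finset.range N, ENNReal.ofReal
          (C * (1 + p * κ ^ n) ^ γ / (σ n - σ (n + 1)) ^ γ) ^ (1 / (p * κ ^ n)))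
        * plnorm μ (U (σ 0)) f p := by
  induction N with
  | zero => simp
  | succ N ih =>
    have step := hiter (σ (N + 1)) (σ N) (p * κ ^ N) (hσpos _) (hσ N.lt_succ_self)
      ((hσ.antitone N.zero_le).trans hσ0) (by positivity)
    rw [mul_assoc, ← pow_succ] at step
    refine step.trans ?_
    rw [Finset.prod_range_succ, mul_comm _ (ENNReal.ofReal _ ^ _), mul_assoc]
    exact mul_le_mul_right ih _

theorem strictAnti_add_div_two_pow (δ : ℝ) {r : ℝ} (hr : 0 < r) :
    StrictAnti fun n : ℕ => δ + r / 2 ^ n :=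
  strictAnti_nat_of_succ_lt fun n => by
    gcongr
    · norm_num
    · exact n.lt_succ_self

theorem add_div_two_pow_sub_succ (δ r : ℝ) (n : ℕ) :
    δ + r / 2 ^ n - (δ + r / 2 ^ (n + 1)) = r / 2 ^ (n + 1) := by
  rw [pow_succ]; ring

theorem statement12_general {X : Type*} [MeasurableSpace X] (μ : Measure X)
    (U : ℝ → Set X)
    (hUmono : ∀ σ' σ : ℝ, 0 < σ' → σ' ≤ σ → σ ≤ 1 → U σ' ⊆ U σ)
    (κ p₀ C γ : ℝ) (hκ : 1 < κ) (hp₀ : 1 ≤ p₀) (hC : 1 ≤ C) (hγ : 0 < γ)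
    (f : X → ℝ) (hf : Measurable f)
    (hiter : ∀ σ' σ β : ℝ, 0 < σ' → σ' < σ → σ ≤ 1 → 0 < β →
      plnorm μ (U σ') f (β * κ)
        ≤ ENNReal.ofReal (C * (1 + β) ^ γ / (σ - σ') ^ γ) ^ (1 / β) *
            plnorm μ (U σ) f β) :
    ∃ M γ₀ : ℝ, 0 < M ∧ 0 < γ₀ ∧
      ∀ δ p : ℝ, δ ∈ Ioo (0 : ℝ) 1 → 0 < p → p ≤ p₀ →
        essSup (fun x => (ENNReal.ofReal |f x|)) (μ.restrict (U δ))
          ≤ ENNReal.ofReal (M / (1 - δ) ^ γ₀) ^ (1 / p) * plnorm μ (U 1) f p := by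
  have hκ0 : 0 < κ := one_pos.trans hκ
  have hκ_inv : 0 < 1 - κ⁻¹ := sub_pos.mpr (inv_lt_one_of_one_lt₀ hκ)
  refine ⟨(C * ((1 + p₀) * (2 * κ)) ^ γ) ^ ((1 - κ⁻¹)⁻¹ ^ 2), γ * (1 - κ⁻¹)⁻¹,
    by positivity, by positivity, ?_⟩
  rintro δ p ⟨hδ0, hδ1⟩ hp hpp₀
  set σ : ℕ → ℝ := fun n => δ + (1 - δ) / 2 ^ n
  have hσ : StrictAnti σ := strictAnti_add_div_two_pow δ (sub_pos.mpr hδ1)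
  have hσ0 : σ 0 = 1 := by simp [σ]
  have hδσ : ∀ n, δ ≤ σ n := fun n =>
    le_add_of_nonneg_right (div_nonneg (sub_nonneg.mpr hδ1.le) (by positivity))
  refine essSup_le_of_lintegral_rpow_le hf.abs.ennreal_ofReal.aemeasurable
    (fun N => by positivity) ((tendsto_pow_atTop_atTop_of_one_lt hκ).const_mul_atTop hp)
    fun N => ?_
  calc plnorm μ (U δ) f (p * κ ^ N)
      ≤ plnorm μ (U (σ N)) f (p * κ ^ N) :=
        plnorm_mono_set μ (hUmono δ (σ N) hδ0 (hδσ N) (hσ0 ▸ hσ.antitone N.zero_le)) f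
          (by positivity)
    _ ≤ _ := plnorm_iterate_le hκ0 hiter hσ (fun n => hδ0.trans_le (hδσ n)) hσ0.le hp N
    _ ≤ _ := by
        simp only [σ, add_div_two_pow_sub_succ, hσ0]
        gcongr
        exact prod_moser_factor_le hκ hC hγ.le (by linarith) (by linarith) hp hpp₀ N

/-- Moser iteration lemma, Lemma A.5.
Let `(U_σ)_{σ∈(0,1]}` be a nondecreasing family of measurable sets, `κ > 1`, `p̄ ≥ 1`,
`C ≥ 1`, `γ > 0`, and let `f` be measurable with
`‖f‖_{L^{βκ}(U_{σ'})} ≤ (C(1+β)^γ/(σ-σ')^γ)^{1/β} ‖f‖_{L^β(U_σ)}` for all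
`0 < σ' < σ ≤ 1`, `β > 0`. Then there are `M = M(C,γ,κ,p̄)` and `γ₀ = γ₀(γ,κ)` with
`esssup_{U_δ} |f| ≤ (M/(1-δ)^{γ₀})^{1/p} ‖f‖_{L^p(U₁)}` for all `δ ∈ (0,1)`, `p ∈ (0,p̄]`. -/
theorem statement12 {X : Type*} [MeasurableSpace X] (μ : Measure X)
    (U : ℝ → Set X)
    (hUmeas : ∀ σ : ℝ, 0 < σ → σ ≤ 1 → MeasurableSet (U σ))
    (hUmono : ∀ σ' σ : ℝ, 0 < σ' → σ' ≤ σ → σ ≤ 1 → U σ' ⊆ U σ)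
    (κ p₀ C γ : ℝ) (hκ : 1 < κ) (hp₀ : 1 ≤ p₀) (hC : 1 ≤ C) (hγ : 0 < γ)
    (f : X → ℝ) (hf : Measurable f)
    (hiter : ∀ σ' σ β : ℝ, 0 < σ' → σ' < σ → σ ≤ 1 → 0 < β →
      plnorm μ (U σ') f (β * κ)
        ≤ ENNReal.ofReal (C * (1 + β) ^ γ / (σ - σ') ^ γ) ^ (1 / β) *
            plnorm μ (U σ) f β) :
    ∃ M γ₀ : ℝ, 0 < M ∧ 0 < γ₀ ∧
      ∀ δ p : ℝ, δ ∈ Ioo (0 : ℝ) 1 → 0 < p → p ≤ p₀ →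
        essSup (fun x => (ENNReal.ofReal |f x|)) (μ.restrict (U δ))
          ≤ ENNReal.ofReal (M / (1 - δ) ^ γ₀) ^ (1 / p) * plnorm μ (U 1) f p :=
  statement12_general μ U hUmono κ p₀ C γ hκ hp₀ hC hγ f hf hiter
end
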